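/- arXiv:1911.02952 — 5 statements merged into one kernel-verified Lean document; each statement's English description precedes it below -/
import Mathlib

section
/- The number of labelled trees on n vertices (n ≥ 1) is n^(n-2) (Cayley's formula). -/
/-!
Joyal's proof. A map `f : V → V` amounts to its set `C` of periodic points, the permutation
that `f` induces on `C`, and the forest rooted in `C` formed by the remaining arrows. A vertebrate
(a tree rooted at its head, with a marked tail) amounts to its spine `C`, the path from tail to
head, the order in which the spine runs through `C`, and the forest rooted in `C` formed by the
remaining edges. A finite set carries as many permutations as linear orders, so there are as many
vertebrates as maps, namely `n ^ n`. There are also `n ^ 2` times as many vertebrates as trees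
rooted at a fixed vertex, and a rooted tree is the same as a tree, through its parent map.
-/

open Function Set

namespace Function

variable {α : Type*} {f g : α → α} {s : Set α}

theorem IsPeriodicPt.mem_of_iterate_mem {n m : ℕ} {x : α} (hx : IsPeriodicPt f n x)
    (hs : MapsTo f s s) (hn : 0 < n) (hm : f^[m] x ∈ s) : x ∈ s := by
  have hback : f^[n * m - m] (f^[m] x) = x := by
    rw [← iterate_add_apply, Nat.sub_add_cancel (Nat.le_mul_of_pos_left m hn)]
    exact (hx.mul_const m).eq
  exact hback ▸ hs.iterate _ hm

theorem exists_iterate_mem_of_eqOn (h : EqOn f g sᶜ) {x : α} {m : ℕ} (hm : f^[m] x ∈ s) :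
    ∃ m', g^[m'] x ∈ s := by
  induction m generalizing x with
  | zero => exact ⟨0, hm⟩
  | succ m ih =>
    by_cases hx : x ∈ s
    · exact ⟨0, hx⟩
    · obtain ⟨m', hm'⟩ := ih (x := f x) hm
      exact ⟨m' + 1, by rwa [iterate_succ_apply, ← h hx]⟩

theorem exists_iterate_mem_periodicPts [Finite α] (f : α → α) (x : α) :
    ∃ m, f^[m] x ∈ periodicPts f := by
  obtain ⟨i, j, hij, heq⟩ := Finite.exists_lt_map_eq_of_forall_mem (f := fun k => f^[k] x)
    (t := univ) (fun _ => mem_univ _) finite_univ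
  refine ⟨i, mk_mem_periodicPts (Nat.sub_pos_of_lt hij) ?_⟩
  change f^[j - i] (f^[i] x) = f^[i] x
  rw [← iterate_add_apply, Nat.sub_add_cancel hij.le]
  exact heq.symm

end Function

namespace SimpleGraph

theorem Connected.exists_adj_dist_lt {V : Type*} {G : SimpleGraph V} (hG : G.Connected) {v r : V}
    (hv : v ≠ r) : ∃ w, G.Adj v w ∧ G.dist w r < G.dist v r := by
  obtain ⟨W, hW⟩ := hG.exists_walk_length_eq_dist v r
  cases W with
  | nil => exact absurd rfl hv
  | cons h W => exact ⟨_, h, (dist_le W).trans_lt (by rw [← hW, Walk.length_cons]; omega)⟩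

end SimpleGraph

namespace Cayley

variable {V : Type*}

/-- A rooted forest with root set `C`, encoded by its parent map `p`: roots are fixed points and
every vertex reaches a root. -/
def IsRootedForest (C : Set V) (p : V → V) : Prop :=
  (∀ c ∈ C, p c = c) ∧ ∀ v, ∃ m, p^[m] v ∈ C

abbrev RootedForest (C : Set V) := {p : V → V // IsRootedForest C p}

namespace IsRootedForest

variable {C : Set V} {p : V → V}

theorem mapsTo (hp : IsRootedForest C p) : MapsTo p C C := fun c hc => (hp.1 c hc).symm ▸ hc

theorem mem_of_isPeriodicPt (hp : IsRootedForest C p) {n : ℕ} {x : V}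
    (hx : IsPeriodicPt p n x) (hn : 0 < n) : x ∈ C :=
  have ⟨_, hm⟩ := hp.2 x
  hx.mem_of_iterate_mem hp.mapsTo hn hm

theorem conj_iff (σ : V ≃ V) :
    IsRootedForest (σ '' C) (σ.arrowCongr σ p) ↔ IsRootedForest C p := by
  have hconj : ∀ m x, (σ.arrowCongr σ p)^[m] (σ x) = σ (p^[m] x) := fun m x =>
    ((Semiconj.iterate_right (f := σ) (fun x => by simp) m) x).symm
  rw [IsRootedForest, IsRootedForest, forall_mem_image]
  refine and_congr (forall₂_congr fun c _ => by simp) ?_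
  rw [← σ.forall_congr_right]
  simp only [hconj, σ.injective.mem_set_image]

theorem nonempty [Nonempty V] (hp : IsRootedForest C p) : C.Nonempty :=
  have ⟨_, hm⟩ := hp.2 (Classical.arbitrary V)
  ⟨_, hm⟩

end IsRootedForest

noncomputable def forestPart (C : Set V) (f : V → V) : V → V :=
  extend (Subtype.val : C → V) Subtype.val f

theorem forestPart_apply_of_mem {C : Set V} {f : V → V} {v : V} (hv : v ∈ C) : forestPart C f v = v :=
  extend_val_apply hv

theorem forestPart_apply_of_notMem {C : Set V} {f : V → V} {v : V} (hv : v ∉ C) :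
    forestPart C f v = f v :=
  extend_val_apply' hv

theorem isRootedForest_forestPart {C : Set V} {f : V → V} (hf : ∀ v, ∃ m, f^[m] v ∈ C) :
    IsRootedForest C (forestPart C f) :=
  ⟨fun _ hc => forestPart_apply_of_mem hc, fun v =>
    have ⟨_, hm⟩ := hf v
    exists_iterate_mem_of_eqOn (fun _ hv => (forestPart_apply_of_notMem hv).symm) hm⟩

section PeriodicPts

variable [Finite V]

theorem periodicPts_extend_perm {C : Set V} (σ : Equiv.Perm C) {g : V → V}
    (hg : IsRootedForest C g) : periodicPts (extend Subtype.val (Subtype.val ∘ σ) g) = C := by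
  have hsemi : Semiconj Subtype.val σ (extend Subtype.val (Subtype.val ∘ σ) g) := fun c =>
    (Subtype.val_injective.extend_apply (Subtype.val ∘ σ) g c).symm
  have hmaps : MapsTo (extend Subtype.val (Subtype.val ∘ σ) g) C C := fun c hc => by
    rw [extend_val_apply hc]; exact (σ _).2
  refine Subset.antisymm (fun v hv => ?_) (fun c hc => ?_)
  · obtain ⟨n, hn, hper⟩ := mem_periodicPts.1 hv
    obtain ⟨_, hm⟩ := hg.2 v
    obtain ⟨_, hm'⟩ := exists_iterate_mem_of_eqOn (fun _ hw => (extend_val_apply' hw).symm) hm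
    exact hper.mem_of_iterate_mem hmaps hn hm'
  · exact hsemi.mapsTo_periodicPts (σ.injective.mem_periodicPts ⟨c, hc⟩)

noncomputable def periodicPtsFiberEquiv (C : Set V) :
    {f : V → V // periodicPts f = C} ≃ Equiv.Perm C × RootedForest C where
  toFun := fun ⟨f, hf⟩ => (BijOn.equiv f (hf ▸ bijOn_periodicPts f),
    ⟨forestPart C f, isRootedForest_forestPart (hf ▸ exists_iterate_mem_periodicPts f)⟩)
  invFun σg :=
    ⟨extend Subtype.val (Subtype.val ∘ σg.1) σg.2.1, periodicPts_extend_perm σg.1 σg.2.2⟩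
  left_inv := fun ⟨f, hf⟩ => by
    ext v
    by_cases hv : v ∈ C
    · exact extend_val_apply hv
    · exact (extend_val_apply' hv).trans (forestPart_apply_of_notMem hv)
  right_inv σg := by
    refine Prod.ext (Equiv.ext fun c => Subtype.ext (extend_val_apply c.2))
      (Subtype.ext (funext fun v => ?_))
    by_cases hv : v ∈ C
    · exact (forestPart_apply_of_mem hv).trans (σg.2.2.1 v hv).symm
    · exact (forestPart_apply_of_notMem hv).trans (extend_val_apply' hv)

end PeriodicPts

/-- Joyal's *vertebrate*: a rooted tree, given by its parent map, with a second marked vertex. -/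
@[ext] structure Vertebrate (V : Type*) where
  tail : V
  head : V
  parent : V → V
  isRootedForest : IsRootedForest {head} parent

namespace Vertebrate

variable (x : Vertebrate V)

-- As the head is fixed, the forward orbit of the tail is the path from the tail to the head.
def spine : Set V := range fun i => x.parent^[i] x.tail

theorem parent_head : x.parent x.head = x.head := x.isRootedForest.1 _ rfl

theorem head_mem_spine : x.head ∈ x.spine :=
  have ⟨m, hm⟩ := x.isRootedForest.2 x.tail
  ⟨m, hm⟩

theorem exists_iterate_mem_spine (v : V) : ∃ m, x.parent^[m] v ∈ x.spine :=
  have ⟨m, hm⟩ := x.isRootedForest.2 v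
  ⟨m, (mem_singleton_iff.1 hm).symm ▸ x.head_mem_spine⟩

theorem iterate_tail_eq_head_of_eq {i j : ℕ} (hij : i < j)
    (h : x.parent^[i] x.tail = x.parent^[j] x.tail) : x.parent^[i] x.tail = x.head := by
  refine x.isRootedForest.mem_of_isPeriodicPt (n := j - i) ?_ (Nat.sub_pos_of_lt hij)
  change x.parent^[j - i] (x.parent^[i] x.tail) = _
  rw [← iterate_add_apply, Nat.sub_add_cancel hij.le, h]

theorem iterate_tail_eq_head_of_le {m j : ℕ} (hm : x.parent^[m] x.tail = x.head) (hj : m ≤ j) :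
    x.parent^[j] x.tail = x.head := by
  rw [← Nat.sub_add_cancel hj, iterate_add_apply, hm]
  exact IsFixedPt.iterate x.parent_head _

theorem iterate_tail_injOn_Iic {m : ℕ} (hmin : ∀ j < m, x.parent^[j] x.tail ≠ x.head) :
    InjOn (fun i => x.parent^[i] x.tail) (Iic m) := by
  intro i hi j hj h
  by_contra hne
  wlog hlt : i < j generalizing i j
  · exact this hj hi h.symm (Ne.symm hne) (by omega)
  exact hmin i (by simp only [mem_Iic] at hj; omega) (x.iterate_tail_eq_head_of_eq hlt h)

theorem card_spine [Finite V] {m : ℕ} (hm : x.parent^[m] x.tail = x.head)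
    (hmin : ∀ j < m, x.parent^[j] x.tail ≠ x.head) : Nat.card x.spine = m + 1 := by
  let walk : Fin (m + 1) → x.spine := fun i => ⟨x.parent^[i] x.tail, mem_range_self _⟩
  have hinj : Injective walk := fun i j h => Fin.ext <|
    x.iterate_tail_injOn_Iic hmin (Nat.le_of_lt_succ i.2) (Nat.le_of_lt_succ j.2)
      (congrArg Subtype.val h)
  have hsurj : Surjective walk := by
    rintro ⟨_, j, rfl⟩
    refine ⟨⟨min j m, by omega⟩, Subtype.ext ?_⟩
    change x.parent^[min j m] x.tail = x.parent^[j] x.tail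
    rcases le_total j m with h | h
    · rw [min_eq_left h]
    · rw [min_eq_right h, hm, x.iterate_tail_eq_head_of_le hm h]
  rw [← Nat.card_eq_of_bijective walk ⟨hinj, hsurj⟩, Nat.card_fin]

theorem exists_card_spine_eq [Finite V] : ∃ m, x.parent^[m] x.tail = x.head ∧
    (∀ j < m, x.parent^[j] x.tail ≠ x.head) ∧ Nat.card x.spine = m + 1 := by
  classical
  have h : ∃ m, x.parent^[m] x.tail = x.head := x.isRootedForest.2 x.tail
  exact ⟨Nat.find h, Nat.find_spec h, fun _ hj => Nat.find_min h hj,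
    x.card_spine (Nat.find_spec h) fun _ hj => Nat.find_min h hj⟩

theorem iterate_card_spine_sub_one [Finite V] :
    x.parent^[Nat.card x.spine - 1] x.tail = x.head := by
  obtain ⟨m, hm, -, hcard⟩ := x.exists_card_spine_eq
  rwa [hcard, Nat.add_sub_cancel]

theorem iterate_tail_injOn [Finite V] :
    InjOn (fun i => x.parent^[i] x.tail) (Iio (Nat.card x.spine)) := by
  obtain ⟨m, -, hmin, hcard⟩ := x.exists_card_spine_eq
  rw [hcard]
  exact (x.iterate_tail_injOn_Iic hmin).mono fun _ hi => Nat.le_of_lt_succ hi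

theorem iterate_min_card_spine_sub_one [Finite V] (j : ℕ) :
    x.parent^[min j (Nat.card x.spine - 1)] x.tail = x.parent^[j] x.tail := by
  rcases le_total j (Nat.card x.spine - 1) with h | h
  · rw [min_eq_left h]
  · rw [min_eq_right h, iterate_card_spine_sub_one,
      x.iterate_tail_eq_head_of_le x.iterate_card_spine_sub_one h]

end Vertebrate

section OfSpine

variable {C : Set V} {k : ℕ}

/-- The parent map that walks along `e` inside `C` and follows `g` outside `C`. -/
noncomputable def spineParent (e : Fin k ≃ C) (g : V → V) : V → V :=
  extend Subtype.val
    (fun c => e ⟨min (e.symm c + 1) (k - 1), by have := (e.symm c).isLt; omega⟩) g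

theorem spineParent_iterate (e : Fin k ≃ C) (g : V → V) (i : Fin k) (j : ℕ) :
    (spineParent e g)^[j] (e i) = e ⟨min (i + j) (k - 1), by omega⟩ := by
  induction j generalizing i with
  | zero => simp [min_eq_left (Nat.le_sub_one_of_lt i.isLt)]
  | succ j ih =>
    rw [iterate_succ_apply, spineParent, extend_val_apply (e i).2]
    simp only [Subtype.coe_eta, Equiv.symm_apply_apply]
    rw [← spineParent, ih]
    congr 3
    simp only
    omega

theorem isRootedForest_spineParent (e : Fin k ≃ C) {g : V → V} (hg : IsRootedForest C g)
    (hk : 0 < k) : IsRootedForest {(e ⟨k - 1, by omega⟩ : V)} (spineParent e g) := by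
  refine ⟨?_, fun v => ?_⟩
  · rintro _ rfl
    simpa using spineParent_iterate e g ⟨k - 1, by omega⟩ 1
  · obtain ⟨_, hm⟩ := hg.2 v
    obtain ⟨m, hm⟩ := exists_iterate_mem_of_eqOn (g := spineParent e g)
      (fun _ hw => (extend_val_apply' hw).symm) hm
    refine ⟨k - 1 + m, ?_⟩
    rw [iterate_add_apply, ← Subtype.coe_mk _ hm, ← e.apply_symm_apply ⟨_, hm⟩,
      spineParent_iterate]
    simp only [mem_singleton_iff]
    congr 3
    omega

variable [Nonempty V]

noncomputable def Vertebrate.ofSpine (e : Fin k ≃ C) (g : RootedForest C) : Vertebrate V :=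
  have hk : 0 < k := (e.symm ⟨_, g.2.nonempty.some_mem⟩).pos
  { tail := e ⟨0, hk⟩
    head := e ⟨k - 1, by omega⟩
    parent := spineParent e g
    isRootedForest := isRootedForest_spineParent e g.2 hk }

theorem Vertebrate.spine_ofSpine (e : Fin k ≃ C) (g : RootedForest C) :
    (ofSpine e g).spine = C := by
  refine Subset.antisymm ?_ fun c hc => ⟨e.symm ⟨c, hc⟩, ?_⟩
  · rintro _ ⟨j, rfl⟩
    simp only [ofSpine, spineParent_iterate]
    exact Subtype.prop _
  · simp only [ofSpine, spineParent_iterate, zero_add]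
    rw [show (⟨_, _⟩ : Fin k) = e.symm ⟨c, hc⟩ from
      Fin.ext (min_eq_left (Nat.le_sub_one_of_lt (e.symm _).isLt)), e.apply_symm_apply]

end OfSpine

theorem Vertebrate.spineParent_forestPart_eq_parent [Finite V] (x : Vertebrate V)
    (e : Fin (Nat.card x.spine) ≃ x.spine) (he : ∀ i, (e i : V) = x.parent^[i] x.tail) :
    spineParent e (forestPart x.spine x.parent) = x.parent := by
  funext v
  by_cases hv : v ∈ x.spine
  · obtain ⟨j, rfl⟩ := hv
    have : Nonempty x.spine := ⟨⟨_, x.head_mem_spine⟩⟩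
    have hc : 0 < Nat.card x.spine := Nat.card_pos
    let i : Fin (Nat.card x.spine) := ⟨min j (Nat.card x.spine - 1), by omega⟩
    have hi : (e i : V) = x.parent^[j] x.tail := (he i).trans (x.iterate_min_card_spine_sub_one j)
    have hstep := spineParent_iterate e (forestPart x.spine x.parent) i 1
    simp only [hi, iterate_one] at hstep
    rw [hstep, he, x.iterate_min_card_spine_sub_one, iterate_succ_apply',
      x.iterate_min_card_spine_sub_one]
  · exact (extend_val_apply' hv).trans (forestPart_apply_of_notMem hv)

noncomputable def spineFiberEquiv [Finite V] [Nonempty V] (C : Set V) :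
    {x : Vertebrate V // x.spine = C} ≃ (Fin (Nat.card C) ≃ C) × RootedForest C where
  toFun x :=
    (Equiv.ofBijective (fun i => ⟨x.1.parent^[i] x.1.tail, x.2.subset (mem_range_self _)⟩)
      (Injective.bijective_of_nat_card_le (fun i j h => Fin.ext <|
        x.1.iterate_tail_injOn (by rw [mem_Iio, x.2]; exact i.2) (by rw [mem_Iio, x.2]; exact j.2)
          (congrArg Subtype.val h)) (by simp)),
     ⟨forestPart C x.1.parent, isRootedForest_forestPart fun v =>
       (x.1.exists_iterate_mem_spine v).imp fun _ hm => x.2.subset hm⟩)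
  invFun eg := ⟨.ofSpine eg.1 eg.2, Vertebrate.spine_ofSpine eg.1 eg.2⟩
  left_inv := by
    rintro ⟨x, rfl⟩
    exact Subtype.ext (Vertebrate.ext rfl x.iterate_card_spine_sub_one
      (x.spineParent_forestPart_eq_parent _ fun _ => rfl))
  right_inv := fun ⟨e, g⟩ => by
    refine Prod.ext (Equiv.ext fun i => Subtype.ext ?_) (Subtype.ext (funext fun v => ?_))
    · change (spineParent e g)^[i] (e _) = e i
      rw [spineParent_iterate]
      congr 2
      simp only [zero_add, Fin.ext_iff]
      omega
    · change forestPart C (spineParent e g) v = g.1 v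
      by_cases hv : v ∈ C
      · exact (forestPart_apply_of_mem hv).trans (g.2.1 v hv).symm
      · exact (forestPart_apply_of_notMem hv).trans (extend_val_apply' hv)

noncomputable def joyalEquiv [Finite V] [Nonempty V] : (V → V) ≃ Vertebrate V :=
  (Equiv.sigmaFiberEquiv periodicPts).symm.trans <|
    (Equiv.sigmaCongrRight fun C => (periodicPtsFiberEquiv C).trans <|
      ((Equiv.equivCongr (Finite.equivFin C) (Equiv.refl C)).prodCongr (Equiv.refl _)).trans
        (spineFiberEquiv C).symm).trans
    (Equiv.sigmaFiberEquiv Vertebrate.spine)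

theorem card_rootedForest_singleton_congr (a b : V) :
    Nat.card (RootedForest ({a} : Set V)) = Nat.card (RootedForest ({b} : Set V)) :=
  have := Classical.decEq V
  Nat.card_congr <| ((Equiv.swap a b).arrowCongr (Equiv.swap a b)).subtypeEquiv fun p => by
    simpa using (IsRootedForest.conj_iff (C := {a}) (p := p) (Equiv.swap a b)).symm

def vertebrateEquiv : Vertebrate V ≃ V × Σ b : V, RootedForest ({b} : Set V) where
  toFun x := (x.tail, ⟨x.head, x.parent, x.isRootedForest⟩)
  invFun y := ⟨y.1, y.2.1, y.2.2.1, y.2.2.2⟩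
  left_inv _ := rfl
  right_inv _ := rfl

theorem card_vertebrate [Finite V] (r : V) : Nat.card (Vertebrate V) =
    Nat.card V * (Nat.card V * Nat.card (RootedForest ({r} : Set V))) := by
  have := Fintype.ofFinite V
  rw [Nat.card_congr vertebrateEquiv, Nat.card_prod, Nat.card_sigma]
  simp [card_rootedForest_singleton_congr _ r]

theorem card_rootedForest_singleton [Finite V] [Nonempty V] (r : V) :
    Nat.card (RootedForest ({r} : Set V)) = Nat.card V ^ (Nat.card V - 2) := by
  have h := Nat.card_congr (joyalEquiv (V := V))
  rw [Nat.card_fun, card_vertebrate r] at h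
  have hn : 0 < Nat.card V := Nat.card_pos
  rcases Nat.lt_or_ge (Nat.card V) 2 with hlt | hge
  · obtain hone : Nat.card V = 1 := by omega
    simpa [hone] using h.symm
  · rw [← pow_sub_mul_pow _ hge, pow_two, mul_comm, mul_assoc] at h
    exact (Nat.eq_of_mul_eq_mul_left hn (Nat.eq_of_mul_eq_mul_left hn h)).symm

section Trees

open SimpleGraph

def parentGraph (p : V → V) : SimpleGraph V := fromRel fun v w => p v = w

theorem parentGraph_adj {p : V → V} {v w : V} :
    (parentGraph p).Adj v w ↔ v ≠ w ∧ (p v = w ∨ p w = v) :=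
  fromRel_adj _ _ _

namespace IsRootedForest

variable {r : V} {p q : V → V}

theorem apply_ne (hp : IsRootedForest {r} p) {v : V} (hv : v ≠ r) : p v ≠ v :=
  fun h => hv (hp.mem_of_isPeriodicPt (n := 1) h one_pos)

theorem apply_apply_ne (hp : IsRootedForest {r} p) {v : V} (hv : v ≠ r) : p (p v) ≠ v :=
  fun h => hv (hp.mem_of_isPeriodicPt (n := 2) h two_pos)

theorem connected_parentGraph (hp : IsRootedForest {r} p) : (parentGraph p).Connected := by
  have hstep : ∀ m v, (parentGraph p).Reachable v (p^[m] v) := by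
    intro m
    induction m with
    | zero => exact fun v => Reachable.refl v
    | succ m ih =>
      intro v
      refine (?_ : (parentGraph p).Reachable v (p v)).trans (ih (p v))
      by_cases h : p v = v
      · rw [h]
      · exact (parentGraph_adj.2 ⟨Ne.symm h, Or.inl rfl⟩).reachable
  refine (connected_iff_exists_forall_reachable _).2 ⟨r, fun v => ?_⟩
  obtain ⟨m, hm⟩ := hp.2 v
  exact (mem_singleton_iff.1 hm ▸ hstep m v).symm

theorem edgeSet_parentGraph (hp : IsRootedForest {r} p) :
    (parentGraph p).edgeSet = (fun v => s(v, p v)) '' {r}ᶜ := by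
  ext e
  induction e using Sym2.ind with
  | _ v w =>
    rw [mem_edgeSet, parentGraph_adj]
    constructor
    · rintro ⟨hne, rfl | rfl⟩
      · exact ⟨v, fun hv => hne (hp.1 v hv).symm, rfl⟩
      · exact ⟨w, fun hw => hne (hp.1 w hw), Sym2.eq_swap⟩
    · rintro ⟨u, hu, huv⟩
      rcases Sym2.eq_iff.1 huv with ⟨rfl, rfl⟩ | ⟨rfl, rfl⟩
      · exact ⟨(hp.apply_ne hu).symm, Or.inl rfl⟩
      · exact ⟨hp.apply_ne hu, Or.inr rfl⟩

theorem isTree_parentGraph [Finite V] (hp : IsRootedForest {r} p) : (parentGraph p).IsTree := by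
  refine isTree_iff_connected_and_card.2 ⟨hp.connected_parentGraph, ?_⟩
  have hinj : InjOn (fun v => s(v, p v)) {r}ᶜ := by
    intro v hv w hw h
    rcases Sym2.eq_iff.1 h with ⟨h, -⟩ | ⟨hvw, hwv⟩
    · exact h
    · exact absurd (by rw [← hvw, hwv]) (hp.apply_apply_ne hw)
  have : Nonempty V := ⟨r⟩
  rw [hp.edgeSet_parentGraph, Nat.card_image_of_injOn hinj, Nat.card_coe_set_eq, ncard_compl,
    ncard_singleton, Nat.sub_add_cancel Nat.card_pos]

/-- If `p` and `q` differ at `v`, the edge `s(v, q v)` of the common graph must be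
`s(q v, p (q v))`, so they differ at `q v` as well; following `q` up to the root then gives a
contradiction. -/
theorem eq_of_parentGraph_eq (hp : IsRootedForest {r} p) (hq : IsRootedForest {r} q)
    (h : parentGraph p = parentGraph q) : p = q := by
  have hmaps : MapsTo q {v | p v ≠ q v} {v | p v ≠ q v} := by
    intro v hv hqv
    have hvr : v ≠ r := fun hvr => hv (by rw [hvr, hp.1 r rfl, hq.1 r rfl])
    have hadj : (parentGraph p).Adj v (q v) :=
      h ▸ parentGraph_adj.2 ⟨(hq.apply_ne hvr).symm, Or.inl rfl⟩
    exact hq.apply_apply_ne hvr (hqv ▸ (parentGraph_adj.1 hadj).2.resolve_left hv)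
  by_contra hne
  obtain ⟨v, hv⟩ : ∃ v, p v ≠ q v := by by_contra! h; exact hne (funext h)
  obtain ⟨m, hm⟩ := hq.2 v
  have := hmaps.iterate m hv
  rw [mem_singleton_iff.1 hm] at this
  exact this (by rw [hp.1 r rfl, hq.1 r rfl])

end IsRootedForest

theorem exists_isRootedForest_parentGraph_eq {T : SimpleGraph V} (hT : T.IsTree) (r : V) :
    ∃ p, IsRootedForest {r} p ∧ parentGraph p = T := by
  classical
  have hstep : ∀ v, ∃ w,
      (v = r → w = r) ∧ (v ≠ r → T.Adj v w ∧ T.dist w r < T.dist v r) := fun v =>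
    if hv : v = r then ⟨r, fun _ => rfl, fun h => absurd hv h⟩
    else (hT.connected.exists_adj_dist_lt hv).imp fun _ hw =>
      ⟨fun h => absurd h hv, fun _ => hw⟩
  choose p hroot hdesc using hstep
  have hreach : ∀ v, ∃ m, p^[m] v = r := by
    intro v
    induction hd : T.dist v r using Nat.strong_induction_on generalizing v with
    | _ n ih =>
      by_cases hv : v = r
      · exact ⟨0, hv⟩
      · obtain ⟨m, hm⟩ := ih _ (hd ▸ (hdesc v hv).2) (p v) rfl
        exact ⟨m + 1, hm⟩
  have hp : IsRootedForest {r} p := ⟨fun _ hc => (hroot _ hc).trans hc.symm, hreach⟩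
  have hle : parentGraph p ≤ T := by
    intro v w hvw
    rcases parentGraph_adj.1 hvw with ⟨hne, rfl | rfl⟩
    · exact (hdesc v fun h => hne (by rw [hroot v h, h])).1
    · exact ((hdesc w fun h => hne (by rw [hroot w h, h])).1).symm
  exact ⟨p, hp, (isTree_iff_minimal_connected.1 hT).eq_of_le hp.connected_parentGraph hle⟩

noncomputable def rootedTreeEquiv [Finite V] (r : V) :
    RootedForest ({r} : Set V) ≃ {T : SimpleGraph V // T.IsTree} :=
  Equiv.ofBijective (fun p => ⟨parentGraph p.1, p.2.isTree_parentGraph⟩)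
    ⟨fun p q h => Subtype.ext (p.2.eq_of_parentGraph_eq q.2 (congrArg Subtype.val h)),
     fun T => have ⟨p, hp, h⟩ := exists_isRootedForest_parentGraph_eq T.2 r
       ⟨⟨p, hp⟩, Subtype.ext h⟩⟩

end Trees

theorem card_isTree [Finite V] [Nonempty V] :
    Nat.card {T : SimpleGraph V // T.IsTree} = Nat.card V ^ (Nat.card V - 2) := by
  rw [← Nat.card_congr (rootedTreeEquiv (Classical.arbitrary V)), card_rootedForest_singleton]

end Cayley

open SimpleGraph

theorem cayley_formula (n : ℕ) (hn : 1 ≤ n) :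
    Nat.card {G : SimpleGraph (Fin n) // G.IsTree} = n ^ (n - 2) := by
  have : Nonempty (Fin n) := ⟨⟨0, hn⟩⟩
  simpa using Cayley.card_isTree (V := Fin n)
end

section
/- If a graph contains two cherries (u1, u2, v) and (u3, u4, w) with {u1, u2, v} ∩ {u3, u4, w} = ∅, then the graph admits two non-trivial automorphisms with disjoint supports. -/
/-!
The two leaves of a cherry have the same neighbourhood, so transposing them is an automorphism
whose support is exactly the two leaves. The supports of the transpositions of two vertex-disjoint
cherries are therefore disjoint.
-/

open SimpleGraph

def IsCherry {V : Type*} (G : SimpleGraph V) (u₁ u₂ v : V) : Prop :=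
  u₁ ≠ u₂ ∧ u₁ ≠ v ∧ u₂ ≠ v ∧ G.Adj u₁ v ∧ G.Adj u₂ v ∧
    (G.neighborSet u₁).ncard = 1 ∧ (G.neighborSet u₂).ncard = 1 ∧ (G.neighborSet v).ncard = 3

namespace SimpleGraph

variable {V : Type*} {G : SimpleGraph V}

def AreTwins (G : SimpleGraph V) (a b : V) : Prop :=
  ∀ x, x ≠ a → x ≠ b → (G.Adj a x ↔ G.Adj b x)

theorem AreTwins.adj_swap_iff [DecidableEq V] {a b : V} (h : G.AreTwins a b) (x y : V) :
    G.Adj (Equiv.swap a b x) (Equiv.swap a b y) ↔ G.Adj x y := by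
  unfold AreTwins at h
  simp only [Equiv.swap_apply_def]
  split_ifs <;> subst_vars <;> grind [adj_comm, SimpleGraph.irrefl]

noncomputable def AreTwins.swapIso {a b : V} (h : G.AreTwins a b) : G ≃g G :=
  letI := Classical.decEq V
  ⟨Equiv.swap a b, h.adj_swap_iff _ _⟩

theorem AreTwins.swapIso_apply_left {a b : V} (h : G.AreTwins a b) : h.swapIso a = b := by
  classical
  exact Equiv.swap_apply_left a b

theorem AreTwins.setOf_swapIso_apply_ne_self {a b : V} (h : G.AreTwins a b) (hab : a ≠ b) :
    {x | h.swapIso x ≠ x} = {a, b} := by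
  classical
  ext x
  exact Equiv.swap_apply_ne_self_iff.trans (and_iff_right hab)

theorem areTwins_of_neighborSet_eq {a b : V} (hab : G.neighborSet a = G.neighborSet b) :
    G.AreTwins a b := fun x _ _ => by
  rw [← mem_neighborSet, hab, mem_neighborSet]

theorem neighborSet_eq_singleton_of_adj {u v : V} (hadj : G.Adj u v)
    (h : (G.neighborSet u).ncard = 1) : G.neighborSet u = {v} := by
  obtain ⟨a, ha⟩ := Set.ncard_eq_one.mp h
  have hv : v ∈ G.neighborSet u := hadj
  rw [ha, Set.mem_singleton_iff] at hv
  rw [ha, hv]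

end SimpleGraph

theorem IsCherry.areTwins {V : Type*} {G : SimpleGraph V} {u₁ u₂ v : V} (h : IsCherry G u₁ u₂ v) :
    G.AreTwins u₁ u₂ := by
  obtain ⟨-, -, -, h₁v, h₂v, h₁, h₂, -⟩ := h
  exact areTwins_of_neighborSet_eq <| by
    rw [neighborSet_eq_singleton_of_adj h₁v h₁, neighborSet_eq_singleton_of_adj h₂v h₂]

theorem two_disjoint_cherries_give_disjoint_automorphisms {V : Type*}
    (G : SimpleGraph V) (u₁ u₂ v u₃ u₄ w : V)
    (h₁ : IsCherry G u₁ u₂ v) (h₂ : IsCherry G u₃ u₄ w)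
    (hdisj : ({u₁, u₂, v} : Set V) ∩ {u₃, u₄, w} = ∅) :
    ∃ σ τ : G ≃g G, (∃ x, σ x ≠ x) ∧ (∃ x, τ x ≠ x) ∧
      {x | σ x ≠ x} ∩ {x | τ x ≠ x} = ∅ := by
  refine ⟨h₁.areTwins.swapIso, h₂.areTwins.swapIso,
    ⟨u₁, by rw [h₁.areTwins.swapIso_apply_left]; exact h₁.1.symm⟩,
    ⟨u₃, by rw [h₂.areTwins.swapIso_apply_left]; exact h₂.1.symm⟩, ?_⟩
  rw [h₁.areTwins.setOf_swapIso_apply_ne_self h₁.1, h₂.areTwins.setOf_swapIso_apply_ne_self h₂.1]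
  have hpair : ∀ a b c : V, ({a, b} : Set V) ⊆ {a, b, c} :=
    fun a b c => Set.insert_subset_insert (Set.singleton_subset_iff.2 (Set.mem_insert b {c}))
  exact Set.subset_eq_empty (Set.inter_subset_inter (hpair _ _ _) (hpair _ _ _)) hdisj
end

section
/- For pairwise distinct indices i1, i2, j ∈ {1, ..., n} with n ≥ 5, the number of labelled trees on {1, ..., n} having a cherry at (i1, i2, j) equals (n-3)^(n-4). -/
open SimpleGraph

namespace CherryAux
open SimpleGraph Walk Finset

variable {V : Type} [DecidableEq V]

/-- Restriction of a graph to the complement of a vertex. -/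
def rest (G : SimpleGraph V) (v : V) : SimpleGraph {x : V // x ≠ v} :=
  G.comap (fun x => (x : V))

@[simp] lemma rest_adj {G : SimpleGraph V} {v : V} {x y : {x : V // x ≠ v}} :
    (rest G v).Adj x y ↔ G.Adj x.1 y.1 := Iff.rfl

/-- Extend a graph on `{x // x ≠ v}` by adding `v` as a leaf attached to `a`. -/
def addLeaf {v : V} (G' : SimpleGraph {x : V // x ≠ v}) (a : {x : V // x ≠ v}) :
    SimpleGraph V where
  Adj x y := (∃ hx : x ≠ v, ∃ hy : y ≠ v, G'.Adj ⟨x, hx⟩ ⟨y, hy⟩) ∨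
    (x = v ∧ y = a.1) ∨ (y = v ∧ x = a.1)
  symm := by
    constructor
    rintro x y (⟨hx, hy, h⟩ | ⟨rfl, rfl⟩ | ⟨rfl, rfl⟩)
    · exact Or.inl ⟨hy, hx, h.symm⟩
    · exact Or.inr (Or.inr ⟨rfl, rfl⟩)
    · exact Or.inr (Or.inl ⟨rfl, rfl⟩)
  loopless := by
    constructor
    rintro x (⟨hx, hy, h⟩ | ⟨rfl, h⟩ | ⟨rfl, h⟩)
    · exact G'.loopless.irrefl _ h
    · exact a.2 h.symm
    · exact a.2 h.symm

lemma addLeaf_adj_base {v : V} {G' : SimpleGraph {x : V // x ≠ v}} {a : {x : V // x ≠ v}}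
    {y : V} : (addLeaf G' a).Adj v y ↔ y = a.1 := by
  constructor
  · rintro (⟨hx, hy, h⟩ | ⟨-, rfl⟩ | ⟨rfl, h⟩)
    · exact absurd rfl hx
    · rfl
    · exact absurd h.symm a.2
  · rintro rfl; exact Or.inr (Or.inl ⟨rfl, rfl⟩)

lemma addLeaf_adj_of_ne {v : V} {G' : SimpleGraph {x : V // x ≠ v}} {a : {x : V // x ≠ v}}
    {x y : V} (hx : x ≠ v) (hy : y ≠ v) :
    (addLeaf G' a).Adj x y ↔ G'.Adj ⟨x, hx⟩ ⟨y, hy⟩ := by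
  constructor
  · rintro (⟨hx', hy', h⟩ | ⟨rfl, rfl⟩ | ⟨rfl, h⟩)
    · exact h
    · exact absurd rfl hx
    · exact absurd rfl hy
  · intro h; exact Or.inl ⟨hx, hy, h⟩

@[simp] lemma rest_addLeaf {v : V} (G' : SimpleGraph {x : V // x ≠ v}) (a : {x : V // x ≠ v}) :
    rest (addLeaf G' a) v = G' := by
  ext x y
  rw [rest_adj, addLeaf_adj_of_ne x.2 y.2]

lemma addLeaf_rest {G : SimpleGraph V} {v : V} {a : {x : V // x ≠ v}}
    (h : G.neighborSet v = {a.1}) : addLeaf (rest G v) a = G := by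
  have hva : G.Adj v a.1 := by
    have : a.1 ∈ G.neighborSet v := by rw [h]; rfl
    exact this
  ext x y
  constructor
  · rintro (⟨hx, hy, h'⟩ | ⟨hx, hy⟩ | ⟨hy, hx⟩)
    · exact h'
    · rw [hx, hy]; exact hva
    · rw [hy, hx]; exact hva.symm
  · intro hadj
    by_cases hx : x = v
    · refine Or.inr (Or.inl ⟨hx, ?_⟩)
      have : y ∈ G.neighborSet v := by rw [← hx]; exact hadj
      rw [h] at this; exact this
    by_cases hy : y = v
    · refine Or.inr (Or.inr ⟨hy, ?_⟩)
      have : x ∈ G.neighborSet v := by rw [← hy]; exact hadj.symm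
      rw [h] at this; exact this
    · exact Or.inl ⟨hx, hy, hadj⟩

/-- neighbor sets of `addLeaf`. -/
lemma addLeaf_neighborSet_base {v : V} (G' : SimpleGraph {x : V // x ≠ v})
    (a : {x : V // x ≠ v}) : (addLeaf G' a).neighborSet v = {a.1} := by
  ext y; simpa using addLeaf_adj_base

lemma addLeaf_neighborSet_of_ne {v : V} (G' : SimpleGraph {x : V // x ≠ v})
    (a : {x : V // x ≠ v}) {x : V} (hx : x ≠ v) (hxa : x ≠ a.1) :
    (addLeaf G' a).neighborSet x = Subtype.val '' (G'.neighborSet ⟨x, hx⟩) := by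
  ext y
  simp only [mem_neighborSet, Set.mem_image]
  constructor
  · intro h
    by_cases hy : y = v
    · subst hy
      exact absurd ((addLeaf_adj_base).mp h.symm) hxa
    · exact ⟨⟨y, hy⟩, (addLeaf_adj_of_ne hx hy).mp h, rfl⟩
  · rintro ⟨z, hz, rfl⟩
    exact (addLeaf_adj_of_ne hx z.2).mpr hz

lemma addLeaf_neighborSet_a {v : V} (G' : SimpleGraph {x : V // x ≠ v})
    (a : {x : V // x ≠ v}) :
    (addLeaf G' a).neighborSet a.1 = insert v (Subtype.val '' (G'.neighborSet a)) := by
  ext y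
  simp only [mem_neighborSet, Set.mem_insert_iff, Set.mem_image]
  constructor
  · intro h
    by_cases hy : y = v
    · exact Or.inl hy
    · refine Or.inr ⟨⟨y, hy⟩, ?_, rfl⟩
      have := (addLeaf_adj_of_ne a.2 hy).mp h
      convert this using 2
  · rintro (rfl | ⟨z, hz, rfl⟩)
    · exact ((addLeaf_adj_base (G' := G') (a := a)).mpr rfl).symm
    · refine (addLeaf_adj_of_ne a.2 z.2).mpr ?_
      convert hz using 2


/-- The embedding of the restricted graph. -/
def restEmb (G : SimpleGraph V) (v : V) : rest G v ↪g G :=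
  SimpleGraph.Embedding.comap ⟨Subtype.val, Subtype.val_injective⟩ G

@[simp] lemma restEmb_apply (G : SimpleGraph V) (v : V) (x : {x : V // x ≠ v}) :
    restEmb G v x = x.1 := rfl

lemma exists_walk_rest {G : SimpleGraph V} {v : V} :
    ∀ {x y : V} (p : G.Walk x y), v ∉ p.support → ∀ (hx : x ≠ v) (hy : y ≠ v),
      ∃ q : (rest G v).Walk ⟨x, hx⟩ ⟨y, hy⟩, q.map (restEmb G v).toHom = p := by
  intro x y p
  induction p with
  | nil => intro _ hx hy; exact ⟨Walk.nil, rfl⟩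
  | @cons x b y h p ih =>
      intro hp hx hy
      rw [Walk.support_cons, List.mem_cons] at hp
      push_neg at hp
      have hb : b ≠ v := fun hb => hp.2 (hb ▸ p.start_mem_support)
      obtain ⟨q, hq⟩ := ih hp.2 hb hy
      exact ⟨Walk.cons ((rest_adj).mpr h) q, by rw [Walk.map_cons, hq]; rfl⟩

lemma exists_adj_of_reachable {G : SimpleGraph V} {x w : V} (hr : G.Reachable x w)
    (hxw : x ≠ w) : ∃ y, G.Adj x y := by
  obtain ⟨p⟩ := hr
  cases p with
  | nil => exact absurd rfl hxw
  | cons h p => exact ⟨_, h⟩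

lemma two_le_ncard_of_two_adj [Fintype V] {G : SimpleGraph V} {v c d : V} (hcd : c ≠ d)
    (hc : G.Adj v c) (hd : G.Adj v d) : 2 ≤ (G.neighborSet v).ncard := by
  have : 1 < (G.neighborSet v).ncard :=
    (Set.one_lt_ncard_iff (Set.toFinite _)).mpr ⟨c, d, hc, hd, hcd⟩
  omega

lemma exists_two_adj_of_mem_path_support {G : SimpleGraph V} {x y v : V}
    {p : G.Walk x y} (hp : p.IsPath) (hv : v ∈ p.support) (hvx : v ≠ x) (hvy : v ≠ y) :
    ∃ c d, c ≠ d ∧ G.Adj v c ∧ G.Adj v d := by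
  induction p with
  | nil =>
      simp only [Walk.support_nil, List.mem_singleton] at hv
      exact absurd hv hvx
  | @cons u b y h q ih =>
      rw [Walk.support_cons, List.mem_cons] at hv
      rcases hv with rfl | hv
      · exact absurd rfl hvx
      rw [Walk.cons_isPath_iff] at hp
      by_cases hvb : v = b
      · subst hvb
        cases q with
        | nil => exact absurd rfl hvy
        | @cons _ c _ h2 q2 =>
            refine ⟨u, c, ?_, h.symm, h2⟩
            rintro rfl
            refine hp.2 ?_
            rw [Walk.support_cons]
            exact List.mem_cons_of_mem _ (Walk.start_mem_support _)
      · exact ih hp.1 hv hvb hvy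

lemma exists_two_adj_of_isCycle_base {G : SimpleGraph V} {v : V} {c : G.Walk v v}
    (hc : c.IsCycle) : ∃ a b, a ≠ b ∧ G.Adj v a ∧ G.Adj v b := by
  cases c with
  | nil => exact absurd rfl hc.ne_nil
  | @cons _ b _ h q =>
      rw [Walk.cons_isCycle_iff] at hc
      have hq : ¬ q.reverse.Nil := by
        rw [Walk.nil_iff_length_eq, Walk.length_reverse]
        intro h0
        have := Walk.eq_of_length_eq_zero h0
        exact h.ne this.symm
      refine ⟨b, q.reverse.getVert 1, ?_, h, q.reverse.adj_snd hq⟩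
      intro hb
      have hmem : s(v, q.reverse.getVert 1) ∈
          (Walk.cons (q.reverse.adj_snd hq) q.reverse.tail).edges := by
        rw [Walk.edges_cons]
        exact List.mem_cons_self
      rw [Walk.cons_tail_eq q.reverse hq] at hmem
      rw [Walk.edges_reverse, List.mem_reverse] at hmem
      rw [← hb] at hmem
      exact hc.2 hmem

lemma exists_two_adj_of_mem_cycle_support {G : SimpleGraph V} {u v : V}
    {c : G.Walk u u} (hc : c.IsCycle) (hv : v ∈ c.support) :
    ∃ a b, a ≠ b ∧ G.Adj v a ∧ G.Adj v b :=
  exists_two_adj_of_isCycle_base (hc.rotate hv)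

lemma ncard_neighborSet_eq_degree [Fintype V] {G : SimpleGraph V} [DecidableRel G.Adj]
    (x : V) : (G.neighborSet x).ncard = G.degree x := by
  rw [← card_neighborSet_eq_degree, Set.ncard_eq_toFinset_card']
  exact Set.toFinset_card _

lemma tree_has_leaf [Fintype V] {G : SimpleGraph V} (hT : G.IsTree)
    (h2 : 2 ≤ Fintype.card V) : ∃ x, (G.neighborSet x).ncard = 1 := by
  classical
  by_contra hno
  push_neg at hno
  have hge : ∀ x, 2 ≤ (G.neighborSet x).ncard := by
    intro x
    obtain ⟨w, hw⟩ := Fintype.exists_ne_of_one_lt_card (by omega) x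
    obtain ⟨y, hy⟩ := exists_adj_of_reachable (hT.isConnected.preconnected x w) (Ne.symm hw)
    have h1 : 1 ≤ (G.neighborSet x).ncard := by
      have : (G.neighborSet x).Nonempty := ⟨y, hy⟩
      have := (Set.ncard_pos (Set.toFinite _)).mpr this
      omega
    rcases Nat.lt_or_ge (G.neighborSet x).ncard 2 with h | h
    · exact absurd (by omega) (hno x)
    · exact h
  have hsum : 2 * Fintype.card V ≤ ∑ x : V, G.degree x := by
    calc 2 * Fintype.card V = ∑ _x : V, 2 := by
          rw [Finset.sum_const, card_univ]; ring
      _ ≤ ∑ x : V, G.degree x := by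
          refine Finset.sum_le_sum fun x _ => ?_
          rw [← ncard_neighborSet_eq_degree]
          exact hge x
  rw [sum_degrees_eq_twice_card_edges] at hsum
  have hcard := hT.card_edgeFinset
  omega

lemma rest_isTree [Fintype V] {G : SimpleGraph V} {v : V} (hT : G.IsTree)
    (hv : (G.neighborSet v).ncard = 1) : (rest G v).IsTree := by
  obtain ⟨a, ha⟩ := Set.ncard_eq_one.mp hv
  have hadj : G.Adj v a := by rw [← mem_neighborSet, ha]; rfl
  constructor
  · haveI : Nonempty {x : V // x ≠ v} := ⟨⟨a, hadj.ne'⟩⟩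
    refine Connected.mk ?_
    rintro ⟨x, hx⟩ ⟨y, hy⟩
    obtain ⟨p0⟩ := hT.isConnected.preconnected x y
    obtain ⟨p, hp⟩ := p0.toPath
    have hvp : v ∉ p.support := by
      intro hmem
      obtain ⟨c, d, hcd, hc, hd⟩ := exists_two_adj_of_mem_path_support hp hmem
        (Ne.symm hx) (Ne.symm hy)
      have := two_le_ncard_of_two_adj hcd hc hd
      omega
    obtain ⟨q, _⟩ := exists_walk_rest p hvp hx hy
    exact ⟨q⟩
  · intro x c hc
    have hmap : ((c.map (restEmb G v).toHom).IsCycle) :=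
      (Walk.map_isCycle_iff_of_injective Subtype.val_injective).mpr hc
    exact hT.IsAcyclic _ hmap

/-- inclusion hom into addLeaf -/
def addLeafHom {v : V} (G' : SimpleGraph {x : V // x ≠ v}) (a : {x : V // x ≠ v}) :
    G' →g addLeaf G' a :=
  ⟨Subtype.val, fun {p q} h => Or.inl ⟨p.2, q.2, h⟩⟩

@[simp] lemma addLeafHom_apply {v : V} (G' : SimpleGraph {x : V // x ≠ v})
    (a x) : addLeafHom G' a x = x.1 := rfl

lemma addLeaf_isTree {v : V} {G' : SimpleGraph {x : V // x ≠ v}} {a : {x : V // x ≠ v}}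
    (hG' : G'.IsTree) : (addLeaf G' a).IsTree := by
  have hreach : ∀ x : V, (addLeaf G' a).Reachable a.1 x := by
    intro x
    by_cases hx : x = v
    · subst hx
      exact (Adj.reachable ((addLeaf_adj_base).mpr rfl)).symm
    · exact (hG'.isConnected.preconnected a ⟨x, hx⟩).map (addLeafHom G' a)
  constructor
  · haveI : Nonempty V := ⟨v⟩
    exact Connected.mk fun x y => (hreach x).symm.trans (hreach y)
  · intro u c hc
    by_cases hv : v ∈ c.support
    · obtain ⟨p, q, hpq, hp, hq⟩ := exists_two_adj_of_mem_cycle_support hc hv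
      have h1 : p = a.1 := (addLeaf_adj_base).mp hp
      have h2 : q = a.1 := (addLeaf_adj_base).mp hq
      exact hpq (h1.trans h2.symm)
    · have hu : u ≠ v := fun h => hv (h ▸ c.start_mem_support)
      obtain ⟨q, hq⟩ := exists_walk_rest c hv hu hu
      have hq' : q.IsCycle := by
        refine (Walk.map_isCycle_iff_of_injective (f := (restEmb _ v).toHom)
          Subtype.val_injective).mp ?_
        rw [hq]
        exact hc
      have hac : (rest (addLeaf G' a) v).IsAcyclic := by
        rw [rest_addLeaf]; exact hG'.IsAcyclic
      exact hac _ hq'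

lemma rest_neighborSet_val (G : SimpleGraph V) (v : V) (x : {x : V // x ≠ v}) :
    Subtype.val '' ((rest G v).neighborSet x) = G.neighborSet x.1 \ {v} := by
  ext y
  simp only [Set.mem_image, mem_neighborSet, rest_adj, Set.mem_diff, Set.mem_singleton_iff]
  constructor
  · rintro ⟨z, hz, rfl⟩; exact ⟨hz, z.2⟩
  · rintro ⟨hadj, hy⟩; exact ⟨⟨y, hy⟩, hadj, rfl⟩

lemma ncard_rest_of_not_adj [Fintype V] {G : SimpleGraph V} {v : V} (x : {x : V // x ≠ v})
    (h : ¬ G.Adj x.1 v) :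
    ((rest G v).neighborSet x).ncard = (G.neighborSet x.1).ncard := by
  have h1 : G.neighborSet x.1 \ {v} = G.neighborSet x.1 := by
    rw [Set.diff_singleton_eq_self]; exact h
  rw [← Set.ncard_image_of_injective _ Subtype.val_injective, rest_neighborSet_val, h1]

lemma ncard_rest_of_adj [Fintype V] {G : SimpleGraph V} {v : V} (x : {x : V // x ≠ v})
    (h : G.Adj x.1 v) :
    ((rest G v).neighborSet x).ncard + 1 = (G.neighborSet x.1).ncard := by
  rw [← Set.ncard_image_of_injective _ Subtype.val_injective, rest_neighborSet_val]
  exact Set.ncard_diff_singleton_add_one h (Set.toFinite _)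


section Helpers
variable [Fintype V]

lemma isAcyclic_of_card_le_two (h : Fintype.card V ≤ 2) (G : SimpleGraph V) :
    G.IsAcyclic := by
  intro u c hc
  have h3 := hc.three_le_length
  have hn : c.support.tail.Nodup := ((Walk.isCycle_def c).mp hc).2.2
  have hlen := hn.length_le_card
  have : c.support.tail.length = c.length := by
    rw [List.length_tail, Walk.length_support]
    omega
  omega

lemma eq_of_card_two (h : Fintype.card V = 2) {x b y : V} (hb : b ≠ x) (hy : y ≠ x) :
    b = y := by
  by_contra hby
  have h3 : ({x, b, y} : Finset V).card = 3 :=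
    Finset.card_eq_three.mpr ⟨x, b, y, hb.symm, hy.symm, hby, rfl⟩
  have h4 := Finset.card_le_univ ({x, b, y} : Finset V)
  rw [h3] at h4
  omega

lemma one_le_ncard_nbr {G : SimpleGraph V} (hG : G.Connected)
    (h2 : 2 ≤ Fintype.card V) (x : V) : 1 ≤ (G.neighborSet x).ncard := by
  obtain ⟨w, hw⟩ := Fintype.exists_ne_of_one_lt_card (by omega) x
  obtain ⟨y, hy⟩ := exists_adj_of_reachable (hG.preconnected x w) (Ne.symm hw)
  have : (G.neighborSet x).Nonempty := ⟨y, hy⟩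
  have := (Set.ncard_pos (Set.toFinite _)).mpr this
  omega

/-- The unique neighbor of a degree-one vertex. -/
noncomputable def theNbr {G : SimpleGraph V} {v : V}
    (hv : (G.neighborSet v).ncard = 1) : V :=
  (Set.ncard_eq_one.mp hv).choose

lemma theNbr_spec {G : SimpleGraph V} {v : V} (hv : (G.neighborSet v).ncard = 1) :
    G.neighborSet v = {theNbr hv} :=
  (Set.ncard_eq_one.mp hv).choose_spec

lemma theNbr_adj {G : SimpleGraph V} {v : V} (hv : (G.neighborSet v).ncard = 1) :
    G.Adj v (theNbr hv) := by
  rw [← mem_neighborSet, theNbr_spec hv]; rfl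

lemma eq_theNbr_of_adj {G : SimpleGraph V} {v : V} (hv : (G.neighborSet v).ncard = 1)
    {y : V} (h : G.Adj v y) : y = theNbr hv := by
  have : y ∈ G.neighborSet v := h
  rw [theNbr_spec hv] at this
  exact this

/-- the minimal leaf of a tree -/
noncomputable def leavesFinset (G : SimpleGraph V) : Finset V :=
  Finset.univ.filter (fun x => (G.neighborSet x).ncard = 1)

lemma mem_leavesFinset {G : SimpleGraph V} {x : V} :
    x ∈ leavesFinset G ↔ (G.neighborSet x).ncard = 1 := by
  simp [leavesFinset]

lemma leavesFinset_nonempty {G : SimpleGraph V} (hG : G.IsTree)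
    (h2 : 2 ≤ Fintype.card V) : (leavesFinset G).Nonempty := by
  obtain ⟨x, hx⟩ := tree_has_leaf hG h2
  exact ⟨x, mem_leavesFinset.mpr hx⟩

variable [LinearOrder V]

noncomputable def minLeaf {G : SimpleGraph V} (hG : G.IsTree)
    (h2 : 2 ≤ Fintype.card V) : V :=
  (leavesFinset G).min' (leavesFinset_nonempty hG h2)

lemma minLeaf_leaf {G : SimpleGraph V} (hG : G.IsTree) (h2 : 2 ≤ Fintype.card V) :
    (G.neighborSet (minLeaf hG h2)).ncard = 1 :=
  mem_leavesFinset.mp ((leavesFinset G).min'_mem _)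

/-- the neighbor of a leaf in a tree on ≥ 3 vertices is not a leaf -/
lemma theNbr_not_leaf {G : SimpleGraph V} (hG : G.IsTree) (h3 : 3 ≤ Fintype.card V)
    {v : V} (hv : (G.neighborSet v).ncard = 1) :
    2 ≤ (G.neighborSet (theNbr hv)).ncard := by
  set a := theNbr hv with ha
  have hadj : G.Adj v a := theNbr_adj hv
  -- find w distinct from v and a
  have hcard : 0 < (Finset.univ \ {v, a} : Finset V).card := by
    have h1 : ({v, a} : Finset V).card ≤ 2 := by
      apply le_trans (Finset.card_insert_le _ _)
      simp
    rw [Finset.card_sdiff_of_subset (Finset.subset_univ _), Finset.card_univ]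
    omega
  obtain ⟨w, hw⟩ := Finset.card_pos.mp hcard
  rw [Finset.mem_sdiff, Finset.mem_insert, Finset.mem_singleton] at hw
  push_neg at hw
  obtain ⟨-, hwv, hwa⟩ := hw
  obtain ⟨p0⟩ := hG.isConnected.preconnected w a
  obtain ⟨p, hp⟩ := p0.toPath
  have hvp : v ∉ p.support := by
    intro hmem
    obtain ⟨c, d, hcd, hc, hd⟩ := exists_two_adj_of_mem_path_support hp hmem
      (Ne.symm hwv) (hadj.ne)
    have := two_le_ncard_of_two_adj hcd hc hd
    omega
  -- look at p.reverse : Walk a w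
  have hq : ¬ p.reverse.Nil := by
    rw [Walk.nil_iff_length_eq, Walk.length_reverse]
    intro h0
    exact hwa (Walk.eq_of_length_eq_zero h0)
  have hadj2 : G.Adj a (p.reverse.getVert 1) := p.reverse.adj_snd hq
  have hne : p.reverse.getVert 1 ≠ v := by
    intro heq
    apply hvp
    have hlen : 0 < p.reverse.length := by
      rwa [Walk.not_nil_iff_lt_length] at hq
    have : p.reverse.getVert 1 ∈ p.reverse.support :=
      Walk.mem_support_iff_exists_getVert.mpr ⟨1, rfl, hlen⟩
    rw [Walk.support_reverse, List.mem_reverse] at this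
    rw [← heq]; exact this
  exact two_le_ncard_of_two_adj (hne.symm) hadj.symm hadj2

end Helpers


lemma min'_congr' {s₁ s₂ : Finset V} (h₁ : s₁.Nonempty) (heq : s₁ = s₂) [LinearOrder V] :
    s₁.min' h₁ = s₂.min' (heq ▸ h₁) := by cases heq; rfl

theorem prufer : ∀ (m : ℕ) (V : Type) [Fintype V] [LinearOrder V],
    Fintype.card V = m + 2 →
    ∃ e : {G : SimpleGraph V // G.IsTree} ≃ (Fin m → V),
      ∀ (T : {G : SimpleGraph V // G.IsTree}) (x : V),
        x ∉ Set.range (e T) ↔ ((T : SimpleGraph V).neighborSet x).ncard = 1 := by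
  intro m
  induction m with
  | zero =>
      intro V _ _ hV
      have htop : (⊤ : SimpleGraph V).IsTree := by
        constructor
        · haveI : Nonempty V := Fintype.card_pos_iff.mp (by omega)
          refine Connected.mk fun x y => ?_
          by_cases hxy : x = y
          · exact hxy ▸ Reachable.refl x
          · exact (SimpleGraph.Adj.reachable (by simp [hxy]))
        · exact isAcyclic_of_card_le_two (by omega) _
      have huniq : ∀ G : SimpleGraph V, G.IsTree → G = ⊤ := by
        intro G hG
        ext x y
        simp only [top_adj]
        constructor
        · exact fun h => h.ne
        · intro hxy
          obtain ⟨p0⟩ := hG.isConnected.preconnected x y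
          obtain ⟨p, hp⟩ := p0.toPath
          cases p with
          | nil => exact absurd rfl hxy
          | @cons _ b _ h q =>
              have hb : b = y := eq_of_card_two hV (G.ne_of_adj h).symm (Ne.symm hxy)
              rwa [hb] at h
      haveI hu1 : Unique {G : SimpleGraph V // G.IsTree} :=
        ⟨⟨⟨⊤, htop⟩⟩, fun G => Subtype.ext (huniq G.1 G.2)⟩
      refine ⟨Equiv.ofUnique {G : SimpleGraph V // G.IsTree} (Fin 0 → V), ?_⟩
      intro T x
      have hLHS : x ∉ Set.range ((Equiv.ofUnique {G : SimpleGraph V // G.IsTree}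
          (Fin 0 → V)) T) := by
        rintro ⟨i, -⟩
        exact i.elim0
      refine iff_of_true hLHS ?_
      obtain ⟨w, hw⟩ := Fintype.exists_ne_of_one_lt_card (by omega) x
      have hnbr : (T : SimpleGraph V).neighborSet x = {w} := by
        rw [huniq T.1 T.2]
        ext z
        simp only [mem_neighborSet, top_adj, Set.mem_singleton_iff]
        constructor
        · intro hz; exact eq_of_card_two hV (Ne.symm hz) hw
        · intro hz; rw [hz]; exact (Ne.symm hw)
      rw [hnbr, Set.ncard_singleton]
  | succ m ih =>
      intro V _ _ hV
      classical
      have hcard2 : 2 ≤ Fintype.card V := by omega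
      have hcard3 : 3 ≤ Fintype.card V := by omega
      have hcard' : ∀ v : V, Fintype.card {x : V // x ≠ v} = m + 2 := by
        intro v
        have h1 : Fintype.card {x : V // x = v} = 1 := Fintype.card_subtype_eq v
        have h2 : Fintype.card {x : V // ¬ x = v} =
            Fintype.card V - Fintype.card {x : V // x = v} := Fintype.card_subtype_compl _
        have h3 : Fintype.card {x : V // x ≠ v} = Fintype.card V - 1 := by
          rw [← h1]; exact h2
        omega
      have H : ∀ v : V,
          ∃ e : {G : SimpleGraph {x : V // x ≠ v} // G.IsTree} ≃ (Fin m → {x : V // x ≠ v}),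
            ∀ T x', (x' ∉ Set.range (e T) ↔
              ((T : SimpleGraph {x : V // x ≠ v}).neighborSet x').ncard = 1) :=
        fun v => ih _ (hcard' v)
      choose E hE using H
      -- parametrized forward and backward maps
      let f' : (T : {G : SimpleGraph V // G.IsTree}) → (v : V) →
          (((T : SimpleGraph V).neighborSet v).ncard = 1) → (Fin (m+1) → V) :=
        fun T v hv => Fin.cons (theNbr hv)
          (fun i => ((E v) ⟨rest T.1 v, rest_isTree T.2 hv⟩ i).1)
      have f'_congr : ∀ T v₁ v₂ h₁ h₂, v₁ = v₂ → f' T v₁ h₁ = f' T v₂ h₂ := by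
        rintro T v₁ v₂ h₁ h₂ rfl; rfl
      have f'_zero : ∀ T v hv, f' T v hv 0 = theNbr hv := fun T v hv => rfl
      have f'_succ : ∀ T v hv (i : Fin m),
          f' T v hv i.succ = ((E v) ⟨rest T.1 v, rest_isTree T.2 hv⟩ i).1 :=
        fun T v hv i => by simp only [f', Fin.cons_succ]
      let f : {G : SimpleGraph V // G.IsTree} → (Fin (m+1) → V) :=
        fun T => f' T (minLeaf T.2 hcard2) (minLeaf_leaf T.2 hcard2)
      have f_eq : ∀ T, f T = f' T (minLeaf T.2 hcard2) (minLeaf_leaf T.2 hcard2) := fun _ => rfl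
      let g' : (s : Fin (m+1) → V) → (v : V) → (∀ i, s i ≠ v) → {G : SimpleGraph V // G.IsTree} :=
        fun s v hsv => ⟨addLeaf ((E v).symm (fun i => ⟨s i.succ, hsv i.succ⟩)).1 ⟨s 0, hsv 0⟩,
          addLeaf_isTree ((E v).symm _).2⟩
      have g'_congr : ∀ s v₁ v₂ h₁ h₂, v₁ = v₂ → g' s v₁ h₁ = g' s v₂ h₂ := by
        rintro s v₁ v₂ h₁ h₂ rfl; rfl
      have hsd : ∀ s : Fin (m+1) → V, (Finset.univ \ Finset.univ.image s).Nonempty := by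
        intro s
        rw [← Finset.card_pos, Finset.card_sdiff_of_subset (Finset.subset_univ _), Finset.card_univ]
        have h1 : (Finset.univ.image s).card ≤ m + 1 := by
          refine le_trans Finset.card_image_le ?_
          simp
        omega
      let vmin : (Fin (m+1) → V) → V := fun s => (Finset.univ \ Finset.univ.image s).min' (hsd s)
      have vmin_eq : ∀ s, vmin s = (Finset.univ \ Finset.univ.image s).min' (hsd s) :=
        fun _ => rfl
      have hvmin_not_mem : ∀ s, vmin s ∉ Set.range s := by
        intro s hmem
        have h1 := (Finset.univ \ Finset.univ.image s).min'_mem (hsd s)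
        rw [Finset.mem_sdiff] at h1
        refine h1.2 ?_
        obtain ⟨i, hi⟩ := hmem
        exact Finset.mem_image.mpr ⟨i, Finset.mem_univ _, hi⟩
      have hvmin_ne : ∀ s i, s i ≠ vmin s := by
        intro s i h
        exact hvmin_not_mem s ⟨i, h⟩
      let g : (Fin (m+1) → V) → {G : SimpleGraph V // G.IsTree} :=
        fun s => g' s (vmin s) (fun i => hvmin_ne s i)
      have g_eq : ∀ s, g s = g' s (vmin s) (fun i => hvmin_ne s i) := fun _ => rfl
      have g'_val : ∀ s v hsv, (g' s v hsv).1 =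
          addLeaf ((E v).symm (fun i => ⟨s i.succ, hsv i.succ⟩)).1 ⟨s 0, hsv 0⟩ :=
        fun _ _ _ => rfl
      -- range of f'
      have hrange : ∀ T v hv, Set.range (f' T v hv) =
          insert (theNbr hv)
            (Set.range (fun i => ((E v) ⟨rest T.1 v, rest_isTree T.2 hv⟩ i).1)) := by
        intro T v hv
        exact Fin.range_cons _ _
      -- the invariant, for f
      have hInv : ∀ T x, x ∉ Set.range (f T) ↔
          ((T : SimpleGraph V).neighborSet x).ncard = 1 := by
        intro T x
        obtain ⟨v, hveq⟩ : ∃ v, minLeaf T.2 hcard2 = v := ⟨_, rfl⟩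
        have hv : ((T : SimpleGraph V).neighborSet v).ncard = 1 :=
          hveq ▸ minLeaf_leaf T.2 hcard2
        have hva : (T : SimpleGraph V).Adj v (theNbr hv) := theNbr_adj hv
        rw [f_eq T, f'_congr T _ v _ hv hveq, hrange T v hv]
        by_cases hxv : x = v
        · subst hxv
          have hnotmem : x ∉ insert (theNbr hv)
              (Set.range (fun i => ((E x) ⟨rest T.1 x, rest_isTree T.2 hv⟩ i).1)) := by
            intro hmem
            rcases Set.mem_insert_iff.mp hmem with h | ⟨i, hi⟩
            · exact hva.ne' h.symm
            · exact (((E x) ⟨rest T.1 x, rest_isTree T.2 hv⟩ i).2) hi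
          exact iff_of_true hnotmem hv
        · by_cases hxa : x = theNbr hv
          · have hmem : x ∈ insert (theNbr hv)
                (Set.range (fun i => ((E v) ⟨rest T.1 v, rest_isTree T.2 hv⟩ i).1)) :=
              Set.mem_insert_iff.mpr (Or.inl hxa)
            simp only [hmem, not_true_eq_false, false_iff]
            have h2 := theNbr_not_leaf T.2 hcard3 hv
            rw [← hxa] at h2
            omega
          · have hnadj : ¬ (T : SimpleGraph V).Adj x v := by
              intro had
              exact hxa (eq_theNbr_of_adj hv had.symm)
            have hiff : x ∉ insert (theNbr hv)
                (Set.range (fun i => ((E v) ⟨rest T.1 v, rest_isTree T.2 hv⟩ i).1)) ↔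
                (⟨x, hxv⟩ : {y : V // y ≠ v}) ∉
                  Set.range ((E v) ⟨rest T.1 v, rest_isTree T.2 hv⟩) := by
              simp only [Set.mem_insert_iff, Set.mem_range, not_or, not_exists]
              constructor
              · rintro ⟨-, h2⟩ i hi
                exact h2 i (by rw [hi])
              · intro h2
                refine ⟨hxa, fun i hi => h2 i (Subtype.ext hi)⟩
            rw [hiff, hE v ⟨rest T.1 v, rest_isTree T.2 hv⟩ ⟨x, hxv⟩]
            exact (ncard_rest_of_not_adj ⟨x, hxv⟩ hnadj) ▸ Iff.rfl
      -- left inverse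
      have hgf : ∀ T, g (f T) = T := by
        intro T
        obtain ⟨v, hveq⟩ : ∃ v, minLeaf T.2 hcard2 = v := ⟨_, rfl⟩
        have hv : ((T : SimpleGraph V).neighborSet v).ncard = 1 :=
          hveq ▸ minLeaf_leaf T.2 hcard2
        have hva : (T : SimpleGraph V).Adj v (theNbr hv) := theNbr_adj hv
        have hfT : f T = f' T v hv := by
          rw [f_eq T]; exact f'_congr T _ v _ hv hveq
        have hkey : Finset.univ \ Finset.univ.image (f T) =
            leavesFinset (T : SimpleGraph V) := by
          ext x
          rw [Finset.mem_sdiff, mem_leavesFinset, ← hInv T x]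
          simp [Set.mem_range]
        have hvmin_eq : vmin (f T) = v := by
          rw [vmin_eq, min'_congr' (hsd (f T)) hkey, ← hveq]
          rfl
        rw [g_eq, g'_congr (f T) _ v _ (fun i => hvmin_eq ▸ hvmin_ne (f T) i) hvmin_eq]
        have hs0 : f T 0 = theNbr hv := by rw [hfT, f'_zero]
        have hmain : ∀ (pf : ∀ i, f T i ≠ v), g' (f T) v pf = T := by
          intro pf
          refine Subtype.ext ((g'_val (f T) v pf).trans ?_)
          have htail : (fun i : Fin m => (⟨f T i.succ, pf i.succ⟩ : {y : V // y ≠ v})) =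
              (E v) ⟨rest T.1 v, rest_isTree T.2 hv⟩ := by
            funext i
            refine Subtype.ext ?_
            show f T i.succ = _
            rw [hfT, f'_succ]
          rw [htail, Equiv.symm_apply_apply]
          have h2 : (⟨f T 0, pf 0⟩ : {y : V // y ≠ v}) = ⟨theNbr hv, hva.ne'⟩ :=
            Subtype.ext hs0
          rw [h2]
          exact addLeaf_rest (theNbr_spec hv)
        exact hmain (fun i => hvmin_eq ▸ hvmin_ne (f T) i)
      -- right inverse
      have hfg : ∀ s, f (g s) = s := by
        intro s
        obtain ⟨v, hveq⟩ : ∃ v, vmin s = v := ⟨_, rfl⟩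
        have hsv : ∀ i, s i ≠ v := fun i => hveq ▸ hvmin_ne s i
        have hvnr : v ∉ Set.range s := hveq ▸ hvmin_not_mem s
        have hgs : g s = g' s v hsv := by
          rw [g_eq]; exact g'_congr s _ v _ hsv hveq
        have hval : (g s).1 = addLeaf ((E v).symm (fun i => ⟨s i.succ, hsv i.succ⟩)).1
            ⟨s 0, hsv 0⟩ := by rw [hgs, g'_val]
        have hEt : (E v) ((E v).symm (fun i => ⟨s i.succ, hsv i.succ⟩)) =
            (fun i => ⟨s i.succ, hsv i.succ⟩) := Equiv.apply_symm_apply _ _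
        have hTnbr_v : ((g s).1.neighborSet v) = {s 0} := by
          rw [hval]; exact addLeaf_neighborSet_base _ _
        have hleaf_v : (((g s).1).neighborSet v).ncard = 1 := by
          rw [hTnbr_v]; exact Set.ncard_singleton _
        have hrs : Set.range s = insert (s 0) (Set.range (fun i : Fin m => s i.succ)) := by
          conv_lhs => rw [← Fin.cons_self_tail s]
          exact Fin.range_cons _ _
        -- leaves characterization
        have hmemleaf : ∀ x : V, ((g s).1.neighborSet x).ncard = 1 ↔ x ∉ Set.range s := by
          intro x
          by_cases hxv : x = v
          · subst hxv
            simp only [hleaf_v, true_iff]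
            exact hvnr
          · by_cases hx0 : x = s 0
            · subst hx0
              have hnbr : (g s).1.neighborSet (s 0) = insert v (Subtype.val ''
                  (((E v).symm (fun i => ⟨s i.succ, hsv i.succ⟩)).1.neighborSet ⟨s 0, hsv 0⟩)) := by
                rw [hval]
                exact addLeaf_neighborSet_a _ _
              have hvni : v ∉ Subtype.val ''
                  (((E v).symm (fun i => ⟨s i.succ, hsv i.succ⟩)).1.neighborSet ⟨s 0, hsv 0⟩) := by
                rintro ⟨z, -, hz⟩
                exact z.2 hz
              have h1le : 1 ≤ ((((E v).symm (fun i => ⟨s i.succ, hsv i.succ⟩)).1).neighborSet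
                  ⟨s 0, hsv 0⟩).ncard := by
                refine one_le_ncard_nbr (((E v).symm _).2).isConnected ?_ _
                rw [hcard' v]
                omega
              have hns : ((g s).1.neighborSet (s 0)).ncard = (Subtype.val ''
                  (((E v).symm (fun i => ⟨s i.succ, hsv i.succ⟩)).1.neighborSet
                    ⟨s 0, hsv 0⟩)).ncard + 1 := by
                rw [hnbr]
                exact Set.ncard_insert_of_notMem hvni (Set.toFinite _)
              rw [hns, Set.ncard_image_of_injective _ Subtype.val_injective]
              constructor
              · intro h; omega
              · intro h; exact absurd ⟨0, rfl⟩ h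
            · have hnbr : (g s).1.neighborSet x = Subtype.val ''
                  (((E v).symm (fun i => ⟨s i.succ, hsv i.succ⟩)).1.neighborSet ⟨x, hxv⟩) := by
                rw [hval]
                exact addLeaf_neighborSet_of_ne _ _ hxv hx0
              rw [hnbr, Set.ncard_image_of_injective _ Subtype.val_injective,
                ← hE v ((E v).symm (fun i => ⟨s i.succ, hsv i.succ⟩)) ⟨x, hxv⟩, hEt]
              constructor
              · intro h hmem
                rw [hrs] at hmem
                rcases Set.mem_insert_iff.mp hmem with h0 | ⟨i, hi⟩
                · exact hx0 h0
                · exact h ⟨i, Subtype.ext hi⟩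
              · intro h hmem
                obtain ⟨i, hi⟩ := hmem
                refine h ?_
                rw [hrs]
                exact Set.mem_insert_iff.mpr (Or.inr ⟨i, congrArg Subtype.val hi⟩)
        have hkey : leavesFinset ((g s).1) = Finset.univ \ Finset.univ.image s := by
          ext x
          rw [Finset.mem_sdiff, mem_leavesFinset, hmemleaf x]
          simp [Set.mem_range]
        have hminleaf : minLeaf (g s).2 hcard2 = v := by
          rw [← hveq, vmin_eq]
          exact min'_congr' (leavesFinset_nonempty (g s).2 hcard2) hkey
        have hvg : (((g s).1).neighborSet v).ncard = 1 := hleaf_v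
        rw [f_eq (g s), f'_congr (g s) _ v _ hvg hminleaf]
        funext i
        refine Fin.cases ?_ ?_ i
        · rw [f'_zero]
          have := theNbr_spec hvg
          rw [hTnbr_v] at this
          exact (Set.singleton_eq_singleton_iff.mp this).symm
        · intro i
          rw [f'_succ]
          have hrest : rest ((g s).1) v = ((E v).symm (fun i => ⟨s i.succ, hsv i.succ⟩)).1 := by
            rw [hval]
            exact rest_addLeaf _ _
          have h3 : (⟨rest ((g s).1) v, rest_isTree (g s).2 hvg⟩ :
              {G : SimpleGraph {y : V // y ≠ v} // G.IsTree}) =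
              (E v).symm (fun i => ⟨s i.succ, hsv i.succ⟩) := Subtype.ext hrest
          rw [h3, hEt]
      exact ⟨⟨f, g, hgf, hfg⟩, hInv⟩


section Count

lemma image_val_singleton {v : V} {S : Set {x : V // x ≠ v}} {a : {x : V // x ≠ v}} :
    Subtype.val '' S = {a.1} ↔ S = {a} := by
  constructor
  · intro h
    have haS : a ∈ S := by
      have h2 : a.1 ∈ Subtype.val '' S := by rw [h]; rfl
      obtain ⟨w, hw, hww⟩ := h2
      rwa [show a = w from Subtype.ext hww.symm]
    ext z
    simp only [Set.mem_singleton_iff]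
    constructor
    · intro hz
      have h2 : z.1 ∈ Subtype.val '' S := ⟨z, hz, rfl⟩
      rw [h, Set.mem_singleton_iff] at h2
      exact Subtype.ext h2
    · rintro rfl
      exact haS
  · rintro rfl
    exact Set.image_singleton

lemma nbrSet_eq_singleton_of [Fintype V] {G : SimpleGraph V} {v a : V}
    (h1 : (G.neighborSet v).ncard = 1) (ha : G.Adj v a) : G.neighborSet v = {a} := by
  rw [theNbr_spec h1, ← eq_theNbr_of_adj h1 ha]

lemma theNbr_eq [Fintype V] {G : SimpleGraph V} {v a : V}
    (hv : (G.neighborSet v).ncard = 1) (h : G.neighborSet v = {a}) : theNbr hv = a := by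
  have h2 := theNbr_spec hv
  rw [h] at h2
  exact (Set.singleton_eq_singleton_iff.mp h2).symm

lemma card_compl_one [Fintype V] (v : V) :
    Fintype.card {x : V // x ≠ v} = Fintype.card V - 1 := by
  have h1 : Fintype.card {x : V // x = v} = 1 := Fintype.card_subtype_eq v
  have h2 : Fintype.card {x : V // ¬ x = v} =
      Fintype.card V - Fintype.card {x : V // x = v} := Fintype.card_subtype_compl _
  rw [← h1]; exact h2

/-- removing a leaf with a prescribed neighbor, keeping track of an extra predicate -/
def restEquiv [Fintype V] (v : V) (a : {x : V // x ≠ v})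
    (P : SimpleGraph {x : V // x ≠ v} → Prop) :
    {G : SimpleGraph V // G.IsTree ∧ G.neighborSet v = {a.1} ∧ P (rest G v)} ≃
      {G' : SimpleGraph {x : V // x ≠ v} // G'.IsTree ∧ P G'} where
  toFun G := ⟨rest G.1 v,
    rest_isTree G.2.1 (by rw [G.2.2.1]; exact Set.ncard_singleton _), G.2.2.2⟩
  invFun G' := ⟨addLeaf G'.1 a, addLeaf_isTree G'.2.1,
    addLeaf_neighborSet_base _ _,
    by rw [rest_addLeaf]; exact G'.2.2⟩
  left_inv G := Subtype.ext (addLeaf_rest G.2.2.1)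
  right_inv G' := Subtype.ext (rest_addLeaf _ _)

/-- removing a leaf, recording its neighbor -/
noncomputable def restEquiv2 [Fintype V] (v : V) :
    {G : SimpleGraph V // G.IsTree ∧ (G.neighborSet v).ncard = 1} ≃
      {p : SimpleGraph {x : V // x ≠ v} × {x : V // x ≠ v} // p.1.IsTree} where
  toFun G := ⟨(rest G.1 v, ⟨theNbr G.2.2, (theNbr_adj G.2.2).ne'⟩), rest_isTree G.2.1 G.2.2⟩
  invFun p := ⟨addLeaf p.1.1 p.1.2, addLeaf_isTree p.2,
    by rw [addLeaf_neighborSet_base]; exact Set.ncard_singleton _⟩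
  left_inv G := Subtype.ext (addLeaf_rest (theNbr_spec G.2.2))
  right_inv p := by
    obtain ⟨⟨G', r⟩, hT⟩ := p
    have hvp : ((addLeaf G' r).neighborSet v).ncard = 1 := by
      rw [addLeaf_neighborSet_base]; exact Set.ncard_singleton _
    refine Subtype.ext (Prod.ext (rest_addLeaf _ _) (Subtype.ext ?_))
    exact theNbr_eq hvp (addLeaf_neighborSet_base G' r)

/-- splitting off the second component -/
def prodSubtypeEquiv {α β : Type} (P : α → Prop) :
    {p : α × β // P p.1} ≃ {a : α // P a} × β where
  toFun p := (⟨p.1.1, p.2⟩, p.1.2)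
  invFun q := ⟨(q.1.1, q.2), q.1.2⟩
  left_inv p := rfl
  right_inv q := rfl

lemma card_trees (V : Type) [Fintype V] [LinearOrder V] (m : ℕ)
    (h : Fintype.card V = m + 2) :
    Nat.card {G : SimpleGraph V // G.IsTree} = (m + 2) ^ m := by
  obtain ⟨e, -⟩ := prufer m V h
  rw [Nat.card_congr e, Nat.card_fun, Nat.card_eq_fintype_card, Nat.card_eq_fintype_card,
    Fintype.card_fin, h]

end Count


end CherryAux

theorem count_trees_with_cherry (n : ℕ) (hn : 5 ≤ n) (i₁ i₂ j : Fin n)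
    (h12 : i₁ ≠ i₂) (h1j : i₁ ≠ j) (h2j : i₂ ≠ j) :
    Nat.card {G : SimpleGraph (Fin n) // G.IsTree ∧ IsCherry G i₁ i₂ j} =
      (n - 3) ^ (n - 4) := by
  classical
  have hji : j ≠ i₁ := Ne.symm h1j
  have h2i : i₂ ≠ i₁ := Ne.symm h12
  have hj2 : (⟨j, hji⟩ : {x : Fin n // x ≠ i₁}) ≠ ⟨i₂, h2i⟩ :=
    fun h => h2j (congrArg Subtype.val h).symm
  -- the nested predicates
  set P₂ : SimpleGraph {y : {x : Fin n // x ≠ i₁} // y ≠ ⟨i₂, h2i⟩} → Prop :=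
    fun G₂ => (G₂.neighborSet ⟨⟨j, hji⟩, hj2⟩).ncard = 1 with hP₂
  set P₁ : SimpleGraph {x : Fin n // x ≠ i₁} → Prop :=
    fun G₁ => G₁.neighborSet ⟨i₂, h2i⟩ = {(⟨⟨j, hji⟩, hj2⟩ :
      {y : {x : Fin n // x ≠ i₁} // y ≠ ⟨i₂, h2i⟩}).1} ∧ P₂ (CherryAux.rest G₁ ⟨i₂, h2i⟩) with hP₁
  have hiff : ∀ G : SimpleGraph (Fin n), (G.IsTree ∧ IsCherry G i₁ i₂ j) ↔
      (G.IsTree ∧ (G.neighborSet i₁ = {(⟨j, hji⟩ : {x : Fin n // x ≠ i₁}).1} ∧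
        P₁ (CherryAux.rest G i₁))) := by
    intro G
    constructor
    · rintro ⟨hT, hne12, hne1j, hne2j, hadj1, hadj2, hc1, hc2, hc3⟩
      have h1 : G.neighborSet i₁ = {j} := CherryAux.nbrSet_eq_singleton_of hc1 hadj1
      have h2 : G.neighborSet i₂ = {j} := CherryAux.nbrSet_eq_singleton_of hc2 hadj2
      refine ⟨hT, h1, ?_, ?_⟩
      · -- neighbor set of i₂ in CherryAux.rest G i₁
        refine CherryAux.image_val_singleton.mp ?_
        rw [CherryAux.rest_neighborSet_val, h2]
        exact Set.diff_singleton_eq_self (fun h => h1j (Set.mem_singleton_iff.mp h))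
      · -- ncard of nbr of j after two removals
        have e1 : ((CherryAux.rest G i₁).neighborSet ⟨j, hji⟩).ncard + 1 =
            (G.neighborSet j).ncard := CherryAux.ncard_rest_of_adj _ hadj1.symm
        have e2 : ((CherryAux.rest (CherryAux.rest G i₁) ⟨i₂, h2i⟩).neighborSet ⟨⟨j, hji⟩, hj2⟩).ncard + 1 =
            ((CherryAux.rest G i₁).neighborSet ⟨j, hji⟩).ncard :=
          CherryAux.ncard_rest_of_adj (G := CherryAux.rest G i₁) _ (by exact hadj2.symm)
        rw [hc3] at e1
        show ((CherryAux.rest (CherryAux.rest G i₁) ⟨i₂, h2i⟩).neighborSet ⟨⟨j, hji⟩, hj2⟩).ncard = 1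
        omega
    · rintro ⟨hT, h1, h2, h3⟩
      have hadj1 : G.Adj i₁ j := by
        rw [← SimpleGraph.mem_neighborSet, h1]; rfl
      have h2' : Subtype.val '' ((CherryAux.rest G i₁).neighborSet ⟨i₂, h2i⟩) =
          {(⟨j, hji⟩ : {x : Fin n // x ≠ i₁}).1} := CherryAux.image_val_singleton.mpr h2
      rw [CherryAux.rest_neighborSet_val] at h2'
      have hni : i₁ ∉ G.neighborSet i₂ := by
        intro hmem
        have : i₂ ∈ G.neighborSet i₁ := hmem.symm
        rw [h1] at this
        exact h2j this
      have h2'' : G.neighborSet i₂ = {j} := by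
        rw [← Set.diff_singleton_eq_self hni]
        exact h2'
      have hadj2 : G.Adj i₂ j := by
        rw [← SimpleGraph.mem_neighborSet, h2'']; rfl
      have e1 : ((CherryAux.rest G i₁).neighborSet ⟨j, hji⟩).ncard + 1 =
          (G.neighborSet j).ncard := CherryAux.ncard_rest_of_adj _ hadj1.symm
      have e2 : ((CherryAux.rest (CherryAux.rest G i₁) ⟨i₂, h2i⟩).neighborSet ⟨⟨j, hji⟩, hj2⟩).ncard + 1 =
          ((CherryAux.rest G i₁).neighborSet ⟨j, hji⟩).ncard :=
        CherryAux.ncard_rest_of_adj (G := CherryAux.rest G i₁) _ (by exact hadj2.symm)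
      have h3' : ((CherryAux.rest (CherryAux.rest G i₁) ⟨i₂, h2i⟩).neighborSet ⟨⟨j, hji⟩, hj2⟩).ncard = 1 := h3
      refine ⟨hT, h12, h1j, h2j, hadj1, hadj2, ?_, ?_, ?_⟩
      · rw [h1]; exact Set.ncard_singleton _
      · rw [h2'']; exact Set.ncard_singleton _
      · omega
  -- chain of equivalences
  have E := (Equiv.subtypeEquivRight hiff).trans
    ((CherryAux.restEquiv i₁ ⟨j, hji⟩ P₁).trans
      ((CherryAux.restEquiv (⟨i₂, h2i⟩ : {x : Fin n // x ≠ i₁}) ⟨⟨j, hji⟩, hj2⟩ P₂).trans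
        ((CherryAux.restEquiv2 (⟨⟨j, hji⟩, hj2⟩ : {y : {x : Fin n // x ≠ i₁} // y ≠ ⟨i₂, h2i⟩})).trans
          (CherryAux.prodSubtypeEquiv _))))
  -- cardinalities
  have hc1 : Fintype.card {x : Fin n // x ≠ i₁} = n - 1 := by
    rw [CherryAux.card_compl_one, Fintype.card_fin]
  have hc2 : Fintype.card {y : {x : Fin n // x ≠ i₁} // y ≠ ⟨i₂, h2i⟩} = n - 2 := by
    rw [CherryAux.card_compl_one, hc1]; omega
  have hc3 : Fintype.card {z : {y : {x : Fin n // x ≠ i₁} // y ≠ ⟨i₂, h2i⟩} //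
      z ≠ ⟨⟨j, hji⟩, hj2⟩} = n - 3 := by
    rw [CherryAux.card_compl_one, hc2]; omega
  rw [Nat.card_congr E, Nat.card_prod, CherryAux.card_trees _ (n - 5) (by rw [hc3]; omega),
    Nat.card_eq_fintype_card, hc3]
  have harith : n - 5 + 2 = n - 3 := by omega
  rw [harith, ← pow_succ]
  congr 1
  omega
end

section
/- There is a bijection between the set of labelled trees on {1, ..., n} (n ≥ 5) having a cherry at fixed pairwise distinct indices (i1, i2, j), and the set of pairs (T, u) where T is a labelled tree on {1, ..., n} \ {i1, i2, j} and u is a vertex of T. -/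
set_option linter.unusedSectionVars false

open SimpleGraph

section WalkHelpers

variable {V : Type*} [DecidableEq V] {G : SimpleGraph V}

private lemma exists_adj_edge {a b : V} (p : G.Walk a b) (hab : a ≠ b) :
    ∃ x, G.Adj a x ∧ s(a,x) ∈ p.edges ∧ x ∈ p.support := by
  cases p with
  | nil => exact absurd rfl hab
  | cons h q => exact ⟨_, h, by simp, by simp⟩

private lemma path_two_nbrs {a b v : V} (p : G.Walk a b) (hp : p.IsPath) (hv : v ∈ p.support)
    (hva : v ≠ a) (hvb : v ≠ b) :
    ∃ x y, x ≠ y ∧ G.Adj v x ∧ G.Adj v y ∧ x ∈ p.support ∧ y ∈ p.support := by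
  have hspec := p.take_spec hv
  obtain ⟨x, hx, hxe, -⟩ := exists_adj_edge ((p.takeUntil v hv).reverse) hva
  obtain ⟨y, hy, hye, -⟩ := exists_adj_edge (p.dropUntil v hv) hvb
  rw [Walk.edges_reverse, List.mem_reverse] at hxe
  have hedges : p.edges = (p.takeUntil v hv).edges ++ (p.dropUntil v hv).edges := by
    rw [← Walk.edges_append, hspec]
  have hnd : p.edges.Nodup := hp.isTrail.edges_nodup
  rw [hedges] at hnd
  have hxy : x ≠ y := by
    rintro rfl
    exact (List.disjoint_of_nodup_append hnd) hxe hye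
  have hxs : x ∈ p.support := by
    have h' : s(v,x) ∈ p.edges := by rw [hedges]; exact List.mem_append_left _ hxe
    exact p.snd_mem_support_of_mem_edges h'
  have hys : y ∈ p.support := by
    have h' : s(v,y) ∈ p.edges := by rw [hedges]; exact List.mem_append_right _ hye
    exact p.snd_mem_support_of_mem_edges h'
  exact ⟨x, y, hxy, hx, hy, hxs, hys⟩

private lemma mem_support_closed_iff {w z : V} (c : G.Walk w w) (hc : ¬ c.Nil) :
    z ∈ c.support ↔ z ∈ c.support.tail := by
  cases c with
  | nil => simp at hc
  | cons h q =>
    simp only [Walk.support_cons, List.mem_cons, List.tail_cons]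
    constructor
    · rintro (rfl | hz)
      · exact q.end_mem_support
      · exact hz
    · exact fun hz => Or.inr hz

private lemma cycle_two_nbrs {w v : V} (c : G.Walk w w) (hc : c.IsCycle) (hv : v ∈ c.support) :
    ∃ x y, x ≠ y ∧ G.Adj v x ∧ G.Adj v y ∧ x ∈ c.support ∧ y ∈ c.support := by
  have hc' : (c.rotate v hv).IsCycle := hc.rotate hv
  have hmem : ∀ z, z ∈ (c.rotate v hv).support → z ∈ c.support := by
    intro z hz
    rw [mem_support_closed_iff _ hc'.not_nil] at hz
    rw [mem_support_closed_iff _ hc.not_nil]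
    exact (c.support_rotate v hv).mem_iff.mp hz
  obtain ⟨x, hadj, q, hq⟩ := Walk.not_nil_iff.mp hc'.not_nil
  rw [hq, Walk.cons_isCycle_iff] at hc'
  obtain ⟨y, hy, hye, -⟩ := exists_adj_edge q.reverse hadj.ne
  rw [Walk.edges_reverse, List.mem_reverse] at hye
  have hxy : x ≠ y := by rintro rfl; exact hc'.2 hye
  refine ⟨x, y, hxy, hadj, hy, hmem x ?_, hmem y ?_⟩
  · rw [hq]; simp
  · rw [hq, Walk.support_cons]
    exact List.mem_cons_of_mem _ (q.snd_mem_support_of_mem_edges hye)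

end WalkHelpers

section LiftWalk

variable {V : Type*} {S : Set V} {G : SimpleGraph V}

private def liftWalk : ∀ {a b : V} (p : G.Walk a b) (h : ∀ x ∈ p.support, x ∈ S),
    (G.induce S).Walk ⟨a, h a p.start_mem_support⟩ ⟨b, h b p.end_mem_support⟩
  | _, _, Walk.nil, _ => Walk.nil
  | _, _, Walk.cons hadj q, h =>
      Walk.cons (by simpa using hadj)
        (liftWalk q (fun x hx => h x (by simp [hx])))

private lemma support_liftWalk : ∀ {a b : V} (p : G.Walk a b) (h : ∀ x ∈ p.support, x ∈ S),
    (liftWalk p h).support.map Subtype.val = p.support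
  | _, _, Walk.nil, _ => rfl
  | _, _, Walk.cons hadj q, h => by
      simp only [liftWalk, Walk.support_cons, List.map_cons, support_liftWalk]

private lemma edges_liftWalk : ∀ {a b : V} (p : G.Walk a b) (h : ∀ x ∈ p.support, x ∈ S),
    (liftWalk p h).edges.map (Sym2.map Subtype.val) = p.edges
  | _, _, Walk.nil, _ => rfl
  | _, _, Walk.cons hadj q, h => by
      simp only [liftWalk, Walk.edges_cons, List.map_cons, edges_liftWalk, Sym2.map_pair_eq]

private lemma liftWalk_isCycle {w : V} (p : G.Walk w w) (hc : p.IsCycle)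
    (h : ∀ x ∈ p.support, x ∈ S) : (liftWalk p h).IsCycle := by
  rw [Walk.isCycle_def]
  refine ⟨⟨?_⟩, ?_, ?_⟩
  · have hnd := hc.isTrail.edges_nodup
    rw [← edges_liftWalk p h] at hnd
    exact hnd.of_map _
  · intro hnil
    cases p with
    | nil => exact hc.ne_nil rfl
    | cons hadj q => simp [liftWalk] at hnil
  · have hnd := hc.support_nodup
    rw [← support_liftWalk p h, ← List.map_tail] at hnd
    exact hnd.of_map _

private lemma acyclic_of_induce (hind : (G.induce S).IsAcyclic)
    (hsub : ∀ (w : V) (c : G.Walk w w), c.IsCycle → ∀ x ∈ c.support, x ∈ S) :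
    G.IsAcyclic := by
  intro v c hc
  exact hind (liftWalk c (hsub v c hc)) (liftWalk_isCycle c hc (hsub v c hc))

private lemma induce_acyclic (hG : G.IsAcyclic) : (G.induce S).IsAcyclic := by
  intro v c hc
  exact hG (c.map (Embedding.induce S (G := G)).toHom)
    (hc.map (Embedding.induce S (G := G)).injective)

private lemma induce_connected (hG : G.Connected) [Nonempty S]
    (hsub : ∀ (a b : V), a ∈ S → b ∈ S → ∀ p : G.Walk a b, p.IsPath →
      ∀ x ∈ p.support, x ∈ S) :
    (G.induce S).Connected := by
  classical
  refine Connected.mk fun a b => ?_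
  obtain ⟨a, ha⟩ := a
  obtain ⟨b, hb⟩ := b
  have h := (hG a b).some.toPath
  exact ⟨liftWalk h.1 (hsub a b ha hb h.1 h.2)⟩

end LiftWalk

section Main

variable {n : ℕ} {i₁ i₂ j : Fin n}

private lemma mem_Sset {x : Fin n} :
    x ∈ ({i₁, i₂, j} : Set (Fin n))ᶜ ↔ x ≠ i₁ ∧ x ≠ i₂ ∧ x ≠ j := by
  simp [not_or]

variable (i₁ i₂ j) in
private def build (u : Fin n) (T : SimpleGraph (({i₁, i₂, j} : Set (Fin n))ᶜ : Set (Fin n))) :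
    SimpleGraph (Fin n) :=
  T.spanningCoe ⊔ SimpleGraph.edge i₁ j ⊔ SimpleGraph.edge i₂ j ⊔ SimpleGraph.edge j u

variable {u : Fin n} {T : SimpleGraph (({i₁, i₂, j} : Set (Fin n))ᶜ : Set (Fin n))}
variable {G : SimpleGraph (Fin n)}

private lemma build_adj (h1j : i₁ ≠ j) (h2j : i₂ ≠ j)
    (hu : u ∈ ({i₁, i₂, j} : Set (Fin n))ᶜ) {x y : Fin n} :
    (build i₁ i₂ j u T).Adj x y ↔
      (∃ a b, T.Adj a b ∧ ↑a = x ∧ ↑b = y) ∨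
        ((x = i₁ ∧ y = j ∨ x = j ∧ y = i₁) ∨ (x = i₂ ∧ y = j ∨ x = j ∧ y = i₂) ∨
          (x = j ∧ y = u ∨ x = u ∧ y = j)) := by
  simp only [build, sup_adj, map_adj, Function.Embedding.coe_subtype, edge_adj]
  have hju : j ≠ u := fun h => (mem_Sset.mp hu).2.2 h.symm
  constructor
  · rintro (((h | ⟨h', -⟩) | ⟨h', -⟩) | ⟨h', -⟩)
    · exact Or.inl h
    · exact Or.inr (Or.inl h')
    · exact Or.inr (Or.inr (Or.inl h'))
    · exact Or.inr (Or.inr (Or.inr h'))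
  · rintro (h | (h' | h' | h'))
    · exact Or.inl (Or.inl (Or.inl h))
    · refine Or.inl (Or.inl (Or.inr ⟨h', ?_⟩))
      rcases h' with ⟨rfl, rfl⟩ | ⟨rfl, rfl⟩
      exacts [h1j, h1j.symm]
    · refine Or.inl (Or.inr ⟨h', ?_⟩)
      rcases h' with ⟨rfl, rfl⟩ | ⟨rfl, rfl⟩
      exacts [h2j, h2j.symm]
    · refine Or.inr ⟨h', ?_⟩
      rcases h' with ⟨rfl, rfl⟩ | ⟨rfl, rfl⟩
      exacts [hju, hju.symm]

section NbrComputations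

variable (h12 : i₁ ≠ i₂) (h1j : i₁ ≠ j) (h2j : i₂ ≠ j)
    (hu : u ∈ ({i₁, i₂, j} : Set (Fin n))ᶜ)
include h12 h1j h2j hu

private lemma build_nbr_i₁ : (build i₁ i₂ j u T).neighborSet i₁ = {j} := by
  ext y
  rw [mem_neighborSet, build_adj h1j h2j hu]
  obtain ⟨hu1, hu2, hu3⟩ := mem_Sset.mp hu
  constructor
  · rintro (⟨a, b, -, ha, -⟩ | ((⟨-, rfl⟩ | ⟨h, -⟩) | (⟨h, -⟩ | ⟨h, -⟩) | (⟨h, -⟩ | ⟨h, -⟩)))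
    · exact absurd ha (mem_Sset.mp a.2).1
    · rfl
    all_goals first
      | exact absurd h h1j
      | exact absurd h h12
      | exact absurd h (fun hh => hu1 hh.symm)
  · rintro rfl; exact Or.inr (Or.inl (Or.inl ⟨rfl, rfl⟩))

private lemma build_nbr_i₂ : (build i₁ i₂ j u T).neighborSet i₂ = {j} := by
  ext y
  rw [mem_neighborSet, build_adj h1j h2j hu]
  obtain ⟨hu1, hu2, hu3⟩ := mem_Sset.mp hu
  constructor
  · rintro (⟨a, b, -, ha, -⟩ | ((⟨h, -⟩ | ⟨h, -⟩) | (⟨-, rfl⟩ | ⟨h, -⟩) | (⟨h, -⟩ | ⟨h, -⟩)))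
    · exact absurd ha (mem_Sset.mp a.2).2.1
    all_goals first
      | rfl
      | exact absurd h h12.symm
      | exact absurd h h2j
      | exact absurd h (fun hh => hu2 hh.symm)
  · rintro rfl; exact Or.inr (Or.inr (Or.inl (Or.inl ⟨rfl, rfl⟩)))

private lemma build_nbr_j : (build i₁ i₂ j u T).neighborSet j = {i₁, i₂, u} := by
  ext y
  rw [mem_neighborSet, build_adj h1j h2j hu]
  obtain ⟨hu1, hu2, hu3⟩ := mem_Sset.mp hu
  constructor
  · rintro (⟨a, b, -, ha, -⟩ | ((⟨h, -⟩ | ⟨-, rfl⟩) | (⟨h, -⟩ | ⟨-, rfl⟩) | (⟨-, rfl⟩ | ⟨h, -⟩)))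
    · exact absurd ha (mem_Sset.mp a.2).2.2
    all_goals first
      | exact Or.inl rfl
      | exact Or.inr (Or.inl rfl)
      | exact Or.inr (Or.inr rfl)
      | exact absurd h h1j.symm
      | exact absurd h h2j.symm
      | exact absurd h hu3.symm
  · rintro (rfl | rfl | rfl)
    · exact Or.inr (Or.inl (Or.inr ⟨rfl, rfl⟩))
    · exact Or.inr (Or.inr (Or.inl (Or.inr ⟨rfl, rfl⟩)))
    · exact Or.inr (Or.inr (Or.inr (Or.inl ⟨rfl, rfl⟩)))

private lemma induce_build :
    (build i₁ i₂ j u T).induce (({i₁, i₂, j} : Set (Fin n))ᶜ) = T := by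
  ext a b
  simp only [comap_adj, Function.Embedding.coe_subtype]
  rw [build_adj h1j h2j hu]
  constructor
  · rintro (⟨x, y, hxy, hx, hy⟩ | (h | h | h))
    · rwa [← Subtype.coe_injective hx, ← Subtype.coe_injective hy]
    all_goals
      exfalso
      rcases h with ⟨h1, h2⟩ | ⟨h1, h2⟩ <;>
        first
          | exact (mem_Sset.mp a.2).1 h1
          | exact (mem_Sset.mp a.2).2.1 h1
          | exact (mem_Sset.mp a.2).2.2 h1
          | exact (mem_Sset.mp b.2).1 h2
          | exact (mem_Sset.mp b.2).2.1 h2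
          | exact (mem_Sset.mp b.2).2.2 h2
  · intro h
    exact Or.inl ⟨a, b, h, rfl, rfl⟩

end NbrComputations

section SupportSubset

variable (hu : u ∈ ({i₁, i₂, j} : Set (Fin n))ᶜ)
    (hN1 : G.neighborSet i₁ = {j}) (hN2 : G.neighborSet i₂ = {j})
    (hNj : G.neighborSet j = {i₁, i₂, u})
include hu hN1 hN2 hNj

private lemma path_support_subset {a b : Fin n} (ha : a ∈ ({i₁, i₂, j} : Set (Fin n))ᶜ)
    (hb : b ∈ ({i₁, i₂, j} : Set (Fin n))ᶜ) (p : G.Walk a b) (hp : p.IsPath) :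
    ∀ x ∈ p.support, x ∈ ({i₁, i₂, j} : Set (Fin n))ᶜ := by
  have hi1 : i₁ ∉ p.support := by
    intro h
    obtain ⟨x, y, hxy, hx, hy, -, -⟩ :=
      path_two_nbrs p hp h (fun e => (mem_Sset.mp ha).1 e.symm)
        (fun e => (mem_Sset.mp hb).1 e.symm)
    rw [← mem_neighborSet, hN1, Set.mem_singleton_iff] at hx hy
    exact hxy (hx.trans hy.symm)
  have hi2 : i₂ ∉ p.support := by
    intro h
    obtain ⟨x, y, hxy, hx, hy, -, -⟩ :=
      path_two_nbrs p hp h (fun e => (mem_Sset.mp ha).2.1 e.symm)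
        (fun e => (mem_Sset.mp hb).2.1 e.symm)
    rw [← mem_neighborSet, hN2, Set.mem_singleton_iff] at hx hy
    exact hxy (hx.trans hy.symm)
  have hj : j ∉ p.support := by
    intro h
    obtain ⟨x, y, hxy, hx, hy, hxs, hys⟩ :=
      path_two_nbrs p hp h (fun e => (mem_Sset.mp ha).2.2 e.symm)
        (fun e => (mem_Sset.mp hb).2.2 e.symm)
    rw [← mem_neighborSet, hNj] at hx hy
    have hx' : x = u := by
      rcases hx with rfl | rfl | rfl
      · exact absurd hxs hi1
      · exact absurd hxs hi2
      · rfl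
    have hy' : y = u := by
      rcases hy with rfl | rfl | rfl
      · exact absurd hys hi1
      · exact absurd hys hi2
      · rfl
    exact hxy (hx'.trans hy'.symm)
  intro x hx
  rw [mem_Sset]
  exact ⟨fun e => hi1 (e ▸ hx), fun e => hi2 (e ▸ hx), fun e => hj (e ▸ hx)⟩

private lemma cycle_support_subset {w : Fin n} (c : G.Walk w w) (hc : c.IsCycle) :
    ∀ x ∈ c.support, x ∈ ({i₁, i₂, j} : Set (Fin n))ᶜ := by
  have hi1 : i₁ ∉ c.support := by
    intro h
    obtain ⟨x, y, hxy, hx, hy, -, -⟩ := cycle_two_nbrs c hc h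
    rw [← mem_neighborSet, hN1, Set.mem_singleton_iff] at hx hy
    exact hxy (hx.trans hy.symm)
  have hi2 : i₂ ∉ c.support := by
    intro h
    obtain ⟨x, y, hxy, hx, hy, -, -⟩ := cycle_two_nbrs c hc h
    rw [← mem_neighborSet, hN2, Set.mem_singleton_iff] at hx hy
    exact hxy (hx.trans hy.symm)
  have hj : j ∉ c.support := by
    intro h
    obtain ⟨x, y, hxy, hx, hy, hxs, hys⟩ := cycle_two_nbrs c hc h
    rw [← mem_neighborSet, hNj] at hx hy
    have hx' : x = u := by
      rcases hx with rfl | rfl | rfl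
      · exact absurd hxs hi1
      · exact absurd hxs hi2
      · rfl
    have hy' : y = u := by
      rcases hy with rfl | rfl | rfl
      · exact absurd hys hi1
      · exact absurd hys hi2
      · rfl
    exact hxy (hx'.trans hy'.symm)
  intro x hx
  rw [mem_Sset]
  exact ⟨fun e => hi1 (e ▸ hx), fun e => hi2 (e ▸ hx), fun e => hj (e ▸ hx)⟩

end SupportSubset

private lemma build_connected (hn : 5 ≤ n) (h1j : i₁ ≠ j) (h2j : i₂ ≠ j)
    (hu : u ∈ ({i₁, i₂, j} : Set (Fin n))ᶜ) (hT : T.Connected) :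
    (build i₁ i₂ j u T).Connected := by
  have hne : Nonempty (Fin n) := ⟨⟨0, by omega⟩⟩
  have hadj1 : (build i₁ i₂ j u T).Adj i₁ j :=
    (build_adj h1j h2j hu).mpr (Or.inr (Or.inl (Or.inl ⟨rfl, rfl⟩)))
  have hadj2 : (build i₁ i₂ j u T).Adj i₂ j :=
    (build_adj h1j h2j hu).mpr (Or.inr (Or.inr (Or.inl (Or.inl ⟨rfl, rfl⟩))))
  have hadju : (build i₁ i₂ j u T).Adj j u :=
    (build_adj h1j h2j hu).mpr (Or.inr (Or.inr (Or.inr (Or.inl ⟨rfl, rfl⟩))))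
  have key : ∀ x : Fin n, (build i₁ i₂ j u T).Reachable x j := by
    intro x
    by_cases hx : x ∈ ({i₁, i₂, j} : Set (Fin n))ᶜ
    · have hr : T.Reachable ⟨x, hx⟩ ⟨u, hu⟩ := hT.preconnected _ _
      have hr2 : T.spanningCoe.Reachable x u := by
        simpa using hr.map (Embedding.spanningCoe T).toHom
      have hr3 : (build i₁ i₂ j u T).Reachable x u :=
        hr2.mono (by
          simp only [build]
          exact le_sup_of_le_left (le_sup_of_le_left le_sup_left))
      exact hr3.trans hadju.symm.reachable
    · have hx' : x = i₁ ∨ x = i₂ ∨ x = j := by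
        by_contra hc
        push_neg at hc
        exact hx (mem_Sset.mpr ⟨hc.1, hc.2.1, hc.2.2⟩)
      rcases hx' with rfl | rfl | rfl
      · exact hadj1.reachable
      · exact hadj2.reachable
      · exact Reachable.refl _
  exact Connected.mk fun a b => (key a).trans (key b).symm

private lemma build_good (hn : 5 ≤ n) (h12 : i₁ ≠ i₂) (h1j : i₁ ≠ j) (h2j : i₂ ≠ j)
    (hu : u ∈ ({i₁, i₂, j} : Set (Fin n))ᶜ) (hT : T.IsTree) :
    (build i₁ i₂ j u T).IsTree ∧ IsCherry (build i₁ i₂ j u T) i₁ i₂ j := by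
  obtain ⟨hu1, hu2, hu3⟩ := mem_Sset.mp hu
  have hadj1 : (build i₁ i₂ j u T).Adj i₁ j :=
    (build_adj h1j h2j hu).mpr (Or.inr (Or.inl (Or.inl ⟨rfl, rfl⟩)))
  have hadj2 : (build i₁ i₂ j u T).Adj i₂ j :=
    (build_adj h1j h2j hu).mpr (Or.inr (Or.inr (Or.inl (Or.inl ⟨rfl, rfl⟩))))
  have hacyc : (build i₁ i₂ j u T).IsAcyclic := by
    refine acyclic_of_induce (S := ({i₁, i₂, j} : Set (Fin n))ᶜ) ?_ ?_
    · rw [induce_build h12 h1j h2j hu]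
      exact hT.IsAcyclic
    · intro w c hc
      exact cycle_support_subset hu (build_nbr_i₁ h12 h1j h2j hu)
        (build_nbr_i₂ h12 h1j h2j hu) (build_nbr_j h12 h1j h2j hu) c hc
  refine ⟨⟨build_connected hn h1j h2j hu hT.isConnected, hacyc⟩,
    h12, h1j, h2j, hadj1, hadj2, ?_, ?_, ?_⟩
  · rw [build_nbr_i₁ h12 h1j h2j hu]; exact Set.ncard_singleton j
  · rw [build_nbr_i₂ h12 h1j h2j hu]; exact Set.ncard_singleton j
  · rw [build_nbr_j h12 h1j h2j hu]
    exact Set.ncard_eq_three.mpr ⟨i₁, i₂, u, h12, hu1.symm, hu2.symm, rfl⟩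

end Main

theorem trees_with_cherry_equiv_pairs (n : ℕ) (hn : 5 ≤ n) (i₁ i₂ j : Fin n)
    (h12 : i₁ ≠ i₂) (h1j : i₁ ≠ j) (h2j : i₂ ≠ j) :
    Nonempty ({G : SimpleGraph (Fin n) // G.IsTree ∧ IsCherry G i₁ i₂ j} ≃
      {p : SimpleGraph (({i₁, i₂, j} : Set (Fin n))ᶜ : Set (Fin n)) ×
          (({i₁, i₂, j} : Set (Fin n))ᶜ : Set (Fin n)) // p.1.IsTree}) := by
  classical
  refine ⟨(Equiv.ofBijective
    (fun p => ⟨build i₁ i₂ j (↑p.1.2) p.1.1,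
      build_good hn h12 h1j h2j p.1.2.2 p.2⟩) ⟨?_, ?_⟩).symm⟩
  · -- injectivity
    rintro ⟨⟨T, u⟩, hT⟩ ⟨⟨T', u'⟩, hT'⟩ h
    simp only [Subtype.mk.injEq] at h
    have hTT : T = T' := by
      rw [← induce_build h12 h1j h2j u.2 (T := T), h, induce_build h12 h1j h2j u'.2]
    have huu : (u : Fin n) = (u' : Fin n) := by
      have hN : ({i₁, i₂, (u : Fin n)} : Set (Fin n)) = {i₁, i₂, (u' : Fin n)} := by
        rw [← build_nbr_j h12 h1j h2j u.2 (T := T), h, build_nbr_j h12 h1j h2j u'.2]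
      have hmem : (u : Fin n) ∈ ({i₁, i₂, (u' : Fin n)} : Set (Fin n)) := by
        rw [← hN]; exact Or.inr (Or.inr rfl)
      rcases hmem with h' | h' | h'
      · exact absurd h' (mem_Sset.mp u.2).1
      · exact absurd h' (mem_Sset.mp u.2).2.1
      · exact h'
    simp only [Subtype.mk.injEq, Prod.mk.injEq]
    exact ⟨hTT, Subtype.ext huu⟩
  · -- surjectivity
    rintro ⟨G, hGtree, hch⟩
    obtain ⟨hc12, hc1j, hc2j, hadj1, hadj2, hcard1, hcard2, hcardj⟩ := hch
    -- neighbor set of i₁ and i₂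
    have hN1 : G.neighborSet i₁ = {j} := by
      obtain ⟨a, ha⟩ := Set.ncard_eq_one.mp hcard1
      have hj' : j ∈ G.neighborSet i₁ := hadj1
      rw [ha, Set.mem_singleton_iff] at hj'
      rw [ha, hj']
    have hN2 : G.neighborSet i₂ = {j} := by
      obtain ⟨a, ha⟩ := Set.ncard_eq_one.mp hcard2
      have hj' : j ∈ G.neighborSet i₂ := hadj2
      rw [ha, Set.mem_singleton_iff] at hj'
      rw [ha, hj']
    -- find the third neighbor u of j
    have hne : (G.neighborSet j \ {i₁, i₂}).Nonempty := by
      rw [Set.nonempty_iff_ne_empty]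
      intro h
      rw [Set.diff_eq_empty] at h
      have hle := Set.ncard_le_ncard h (Set.toFinite _)
      rw [hcardj] at hle
      have h2 : ({i₁, i₂} : Set (Fin n)).ncard ≤ 2 := by
        refine (Set.ncard_insert_le _ _).trans ?_
        simp [Set.ncard_singleton]
      omega
    obtain ⟨u, humem, hunot⟩ := hne
    have hu1 : u ≠ i₁ := fun e => hunot (by simp [e])
    have hu2 : u ≠ i₂ := fun e => hunot (by simp [e])
    have hu3 : u ≠ j := (G.adj_symm humem).ne
    have hu : u ∈ ({i₁, i₂, j} : Set (Fin n))ᶜ := mem_Sset.mpr ⟨hu1, hu2, hu3⟩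
    have hNj : G.neighborSet j = {i₁, i₂, u} := by
      refine (Set.eq_of_subset_of_ncard_le ?_ ?_ (Set.toFinite _)).symm
      · rintro x (rfl | rfl | rfl)
        · exact hadj1.symm
        · exact hadj2.symm
        · exact humem
      · rw [hcardj]
        exact le_of_eq (Set.ncard_eq_three.mpr ⟨i₁, i₂, u, h12, hu1.symm, hu2.symm, rfl⟩).symm
    -- G is reconstructed from its induced subgraph and u
    have hrecon : G = build i₁ i₂ j u (G.induce (({i₁, i₂, j} : Set (Fin n))ᶜ)) := by
      ext x y
      rw [build_adj h1j h2j hu]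
      constructor
      · intro h
        by_cases hx : x ∈ ({i₁, i₂, j} : Set (Fin n))ᶜ
        · by_cases hy : y ∈ ({i₁, i₂, j} : Set (Fin n))ᶜ
          · exact Or.inl ⟨⟨x, hx⟩, ⟨y, hy⟩, h, rfl, rfl⟩
          · have hy' : y = i₁ ∨ y = i₂ ∨ y = j := by
              by_contra hc
              push_neg at hc
              exact hy (mem_Sset.mpr ⟨hc.1, hc.2.1, hc.2.2⟩)
            rcases hy' with rfl | rfl | rfl
            · have hmem : x ∈ G.neighborSet y := h.symm
              rw [hN1, Set.mem_singleton_iff] at hmem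
              exact Or.inr (Or.inl (Or.inr ⟨hmem, rfl⟩))
            · have hmem : x ∈ G.neighborSet y := h.symm
              rw [hN2, Set.mem_singleton_iff] at hmem
              exact Or.inr (Or.inr (Or.inl (Or.inr ⟨hmem, rfl⟩)))
            · have hx' : x ∈ G.neighborSet y := h.symm
              rw [hNj] at hx'
              rcases hx' with rfl | rfl | rfl
              · exact Or.inr (Or.inl (Or.inl ⟨rfl, rfl⟩))
              · exact Or.inr (Or.inr (Or.inl (Or.inl ⟨rfl, rfl⟩)))
              · exact Or.inr (Or.inr (Or.inr (Or.inr ⟨rfl, rfl⟩)))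
        · have hx' : x = i₁ ∨ x = i₂ ∨ x = j := by
            by_contra hc
            push_neg at hc
            exact hx (mem_Sset.mpr ⟨hc.1, hc.2.1, hc.2.2⟩)
          rcases hx' with rfl | rfl | rfl
          · have hmem : y ∈ G.neighborSet x := h
            rw [hN1, Set.mem_singleton_iff] at hmem
            exact Or.inr (Or.inl (Or.inl ⟨rfl, hmem⟩))
          · have hmem : y ∈ G.neighborSet x := h
            rw [hN2, Set.mem_singleton_iff] at hmem
            exact Or.inr (Or.inr (Or.inl (Or.inl ⟨rfl, hmem⟩)))
          · have hy' : y ∈ G.neighborSet x := h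
            rw [hNj] at hy'
            rcases hy' with rfl | rfl | rfl
            · exact Or.inr (Or.inl (Or.inr ⟨rfl, rfl⟩))
            · exact Or.inr (Or.inr (Or.inl (Or.inr ⟨rfl, rfl⟩)))
            · exact Or.inr (Or.inr (Or.inr (Or.inl ⟨rfl, rfl⟩)))
      · rintro (⟨a, b, hab, rfl, rfl⟩ | (h' | h' | h'))
        · exact hab
        · rcases h' with ⟨rfl, rfl⟩ | ⟨rfl, rfl⟩
          exacts [hadj1, hadj1.symm]
        · rcases h' with ⟨rfl, rfl⟩ | ⟨rfl, rfl⟩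
          exacts [hadj2, hadj2.symm]
        · rcases h' with ⟨rfl, rfl⟩ | ⟨rfl, rfl⟩
          exacts [humem, (G.adj_symm humem)]
    -- the induced subgraph is a tree
    have hSne : Nonempty (({i₁, i₂, j} : Set (Fin n))ᶜ : Set (Fin n)) := ⟨⟨u, hu⟩⟩
    have hindtree : (G.induce (({i₁, i₂, j} : Set (Fin n))ᶜ)).IsTree := by
      constructor
      · exact induce_connected hGtree.isConnected (fun a b ha hb p hp => path_support_subset hu hN1 hN2 hNj ha hb p hp)
      · exact induce_acyclic hGtree.IsAcyclic
    refine ⟨⟨⟨G.induce (({i₁, i₂, j} : Set (Fin n))ᶜ), ⟨u, hu⟩⟩, hindtree⟩, ?_⟩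
    exact Subtype.ext hrecon.symm
end

section
/- The sequence (1/4)·n!/(n-6)!·(n-6)^(n-6)/n^(n-2) + n(n-1)(n-2)(n-3)^(n-4)/n^(n-2), divided by ((1/2)·n(n-1)(n-2)(n-3)^(n-4)/n^(n-2))^2, tends to 1 as n → ∞. -/
/-!
Factoring out powers of `n`,
`E[C_n] = (n/2) (1 - 1/n) (1 - 2/n) (1 - 3/n)^(n-4)` and
`E[C_n²] - 2 E[C_n] = (n/2)² (1 - 1/n) ⋯ (1 - 5/n) (1 - 6/n)^(n-6)`.
Since `(1 - c/n)^(n-k) → exp (-c)`, the first is `~ exp (-3) n/2 → ∞` and the second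
`~ exp (-6) (n/2)²`, so `E[C_n²] / E[C_n]² = exp (-6) / exp (-3)² + 2 / E[C_n] + o(1) → 1`.
-/

open Filter Real Topology Nat

theorem tendsto_one_sub_div_natCast (c : ℝ) : Tendsto (fun n : ℕ => 1 - c / n) atTop (𝓝 1) := by
  simpa using (tendsto_const_div_atTop_nhds_zero_nat c).const_sub 1

theorem tendsto_one_sub_div_natCast_pow_sub (c : ℝ) (k : ℕ) :
    Tendsto (fun n : ℕ => (1 - c / n) ^ (n - k)) atTop (𝓝 (exp (-c))) := by
  have hpow : Tendsto (fun n : ℕ => (1 - c / n) ^ n) atTop (𝓝 (exp (-c))) := by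
    simpa [sub_eq_add_neg, neg_div] using tendsto_one_add_div_pow_exp (-c)
  have htail : Tendsto (fun n : ℕ => (1 - c / n) ^ k) atTop (𝓝 1) := by
    simpa using (tendsto_one_sub_div_natCast c).pow k
  refine (div_one (exp (-c)) ▸ hpow.div htail one_ne_zero).congr' ?_
  filter_upwards [eventually_ge_atTop k, (tendsto_one_sub_div_natCast c).eventually_ne one_ne_zero]
    with n hkn hne
  rw [Pi.div_apply, div_eq_iff (pow_ne_zero k hne), ← pow_add, Nat.sub_add_cancel hkn]

theorem natCast_sub_pow (c : ℝ) {n : ℕ} (hn : n ≠ 0) (k : ℕ) :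
    ((n : ℝ) - c) ^ k = (n : ℝ) ^ k * (1 - c / n) ^ k := by
  rw [← mul_pow, mul_sub, mul_one, mul_div_cancel₀ _ (by exact_mod_cast hn)]

theorem factorial_div_factorial_sub_six {n : ℕ} (hn : 6 ≤ n) :
    (n ! : ℝ) / (n - 6)! = n * (n - 1) * (n - 2) * (n - 3) * (n - 4) * (n - 5) := by
  obtain ⟨m, rfl⟩ := Nat.exists_eq_add_of_le' hn
  simp only [factorial_succ, cast_mul, cast_add, cast_ofNat, cast_one, add_tsub_cancel_right]
  field_simp
  ring

/-- The expected number `E[C_n]` of cherries of a uniform random labelled tree on `n` vertices. -/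
noncomputable def cherryMean (n : ℕ) : ℝ :=
  (1 / 2 : ℝ) * n * (n - 1) * (n - 2) * ((n : ℝ) - 3) ^ (n - 4) / (n : ℝ) ^ (n - 2)

/-- The second moment `E[C_n²]`. -/
noncomputable def cherrySecondMoment (n : ℕ) : ℝ :=
  (1 / 4 : ℝ) * ((n.factorial : ℝ) / ((n - 6).factorial : ℝ)) * ((n : ℝ) - 6) ^ (n - 6)
      / (n : ℝ) ^ (n - 2)
    + (n : ℝ) * (n - 1) * (n - 2) * ((n : ℝ) - 3) ^ (n - 4) / (n : ℝ) ^ (n - 2)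

theorem cherryMean_eq {n : ℕ} (hn : 4 ≤ n) :
    cherryMean n = n / 2 * ((1 - 1 / n) * (1 - 2 / n) * (1 - 3 / n) ^ (n - 4)) := by
  obtain ⟨m, rfl⟩ := Nat.exists_eq_add_of_le' hn
  rw [cherryMean, natCast_sub_pow 3 (by omega), show m + 4 - 2 = m + 2 by omega,
    show m + 4 - 4 = m by omega]
  field_simp
  ring

theorem cherrySecondMoment_sub_eq {n : ℕ} (hn : 6 ≤ n) :
    cherrySecondMoment n - 2 * cherryMean n = (n / 2) ^ 2 * ((1 - 1 / n) * (1 - 2 / n)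
      * (1 - 3 / n) * (1 - 4 / n) * (1 - 5 / n) * (1 - 6 / n) ^ (n - 6)) := by
  obtain ⟨m, rfl⟩ := Nat.exists_eq_add_of_le' hn
  rw [cherrySecondMoment, cherryMean, factorial_div_factorial_sub_six hn,
    natCast_sub_pow 6 (by omega), show m + 6 - 2 = m + 4 by omega, show m + 6 - 6 = m by omega]
  field_simp
  ring

theorem tendsto_cherryMean_div_half_natCast :
    Tendsto (fun n : ℕ => cherryMean n / (n / 2)) atTop (𝓝 (exp (-3))) := by
  have hlim := ((tendsto_one_sub_div_natCast 1).mul (tendsto_one_sub_div_natCast 2)).mul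
    (tendsto_one_sub_div_natCast_pow_sub 3 4)
  rw [mul_one, one_mul] at hlim
  refine hlim.congr' ?_
  filter_upwards [eventually_ge_atTop 4] with n hn
  rw [cherryMean_eq hn, mul_div_cancel_left₀ _ (by positivity)]

theorem tendsto_cherrySecondMoment_sub_div_half_natCast_sq :
    Tendsto (fun n : ℕ => (cherrySecondMoment n - 2 * cherryMean n) / (n / 2) ^ 2) atTop
      (𝓝 (exp (-6))) := by
  have hlim := (((((tendsto_one_sub_div_natCast 1).mul (tendsto_one_sub_div_natCast 2)).mul
    (tendsto_one_sub_div_natCast 3)).mul (tendsto_one_sub_div_natCast 4)).mul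
    (tendsto_one_sub_div_natCast 5)).mul (tendsto_one_sub_div_natCast_pow_sub 6 6)
  simp only [mul_one, one_mul] at hlim
  refine hlim.congr' ?_
  filter_upwards [eventually_ge_atTop 6] with n hn
  rw [cherrySecondMoment_sub_eq hn, mul_div_cancel_left₀ _ (by positivity)]

theorem tendsto_cherryMean_atTop : Tendsto cherryMean atTop atTop := by
  refine ((tendsto_natCast_atTop_atTop.atTop_div_const two_pos).atTop_mul_pos (exp_pos _)
    tendsto_cherryMean_div_half_natCast).congr' ?_
  filter_upwards [eventually_ne_atTop 0] with n hn
  exact mul_div_cancel₀ _ (by positivity)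

theorem ratio_tendsto_one :
    Tendsto (fun n : ℕ =>
        (((1 / 4 : ℝ) * ((n.factorial : ℝ) / ((n - 6).factorial : ℝ)) * ((n : ℝ) - 6) ^ (n - 6)
              / (n : ℝ) ^ (n - 2))
          + (n : ℝ) * (n - 1) * (n - 2) * ((n : ℝ) - 3) ^ (n - 4) / (n : ℝ) ^ (n - 2)) /
        (((1 / 2 : ℝ) * n * (n - 1) * (n - 2) * ((n : ℝ) - 3) ^ (n - 4) / (n : ℝ) ^ (n - 2)) ^ 2))
      atTop (nhds 1) := by
  change Tendsto (fun n => cherrySecondMoment n / cherryMean n ^ 2) atTop (𝓝 1)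
  have hlim := (tendsto_cherrySecondMoment_sub_div_half_natCast_sq.div
    (tendsto_cherryMean_div_half_natCast.pow 2) (by positivity)).add
    (tendsto_cherryMean_atTop.const_div_atTop 2)
  rw [← exp_nat_mul, add_zero, ← exp_sub, show -6 - ((2 : ℕ) : ℝ) * -3 = 0 by norm_num,
    exp_zero] at hlim
  refine hlim.congr' ?_
  filter_upwards [eventually_ne_atTop 0, tendsto_cherryMean_atTop.eventually_ne_atTop 0]
    with n hn hM
  rw [Pi.div_apply]
  field_simp
  ring
end
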